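/- arXiv:1304.0071 — 5 statements merged into one kernel-verified Lean document; each statement's English description precedes it below -/
import Mathlib

section
/- Let ψ : ℤ → ℂ be a sequence supported in [-N, N]. Then ψ is positive definite on ℤ if and only if the trigonometric polynomial T(t) = ∑_{n=-N}^{N} ψ(n) e^{2πint} is nonnegative for all t ∈ ℝ. -/
open Complex ComplexOrder Finset

noncomputable section

/-- `ee z = exp(2πiz)`. -/
def ee (z : ℂ) : ℂ := Complex.exp (2 * (Real.pi : ℂ) * Complex.I * z)

lemma ee_add (z w : ℂ) : ee (z + w) = ee z * ee w := by
  simp [ee, mul_add, Complex.exp_add]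

lemma ee_int (n : ℤ) : ee (n : ℂ) = 1 := by
  simpa [ee, mul_comm, mul_assoc, mul_left_comm] using Complex.exp_int_mul_two_pi_mul_I n

lemma ee_conj {z : ℂ} (h : (starRingEnd ℂ) z = z) : (starRingEnd ℂ) (ee z) = ee (-z) := by
  rw [ee, ← Complex.exp_conj]
  congr 1
  simp only [map_mul, h, Complex.conj_I, map_ofNat, Complex.conj_ofReal]
  ring

lemma ee_pow (z : ℂ) (l : ℕ) : ee z ^ l = ee (l * z) := by
  rw [ee, ee, ← Complex.exp_nat_mul]
  ring_nf

lemma geom (M : ℕ) (hM : 0 < M) (r : ℤ) :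
    ∑ l ∈ range M, ee ((r : ℂ) * (l : ℂ) / (M : ℂ)) =
      if (M : ℤ) ∣ r then (M : ℂ) else 0 := by
  have hMC : (M : ℂ) ≠ 0 := Nat.cast_ne_zero.mpr hM.ne'
  have hterm : ∀ l : ℕ, ee ((r : ℂ) * (l : ℂ) / (M : ℂ)) = ee ((r : ℂ) / M) ^ l := by
    intro l
    rw [ee_pow]
    congr 1
    ring
  simp only [hterm]
  by_cases hdvd : (M : ℤ) ∣ r
  · obtain ⟨s, hs⟩ := hdvd
    have h1 : ee ((r : ℂ) / M) = 1 := by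
      have : (r : ℂ) / M = (s : ℂ) := by
        rw [hs]; push_cast; field_simp
      rw [this, ee_int]
    rw [if_pos ⟨s, hs⟩]
    simp [h1]
  · have hne : ee ((r : ℂ) / M) ≠ 1 := by
      intro hone
      unfold ee at hone
      rw [Complex.exp_eq_one_iff] at hone
      obtain ⟨k, hk⟩ := hone
      have h2 : (2 * (Real.pi : ℂ) * Complex.I) ≠ 0 := by
        simp [Real.pi_ne_zero, Complex.I_ne_zero]
      have h3 : (r : ℂ) / M = (k : ℂ) := mul_left_cancel₀ h2 (by linear_combination hk)
      rw [div_eq_iff hMC] at h3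
      exact hdvd ⟨k, by rw [mul_comm]; exact_mod_cast h3⟩
    have hpow : ee ((r : ℂ) / M) ^ M = 1 := by
      rw [ee_pow]
      have : (M : ℂ) * ((r : ℂ) / M) = (r : ℂ) := by field_simp
      rw [this, ee_int]
    rw [geom_sum_eq hne, if_neg hdvd, hpow]
    simp


lemma sum_range_eq_sum_Icc (f : ℤ → ℂ) (a : ℤ) (M : ℕ) :
    ∑ j ∈ range M, f (a + j) = ∑ m ∈ Finset.Icc a (a + M - 1), f m := by
  induction M with
  | zero => rw [Finset.Icc_eq_empty (by omega)]; simp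
  | succ M ih =>
      rw [Finset.sum_range_succ, ih]
      have h1 : Finset.Icc a (a + (M + 1 : ℕ) - 1) =
          insert (a + M) (Finset.Icc a (a + M - 1)) := by
        ext m
        simp only [Finset.mem_Icc, Finset.mem_insert]
        push_cast
        omega
      rw [h1, Finset.sum_insert (by simp only [Finset.mem_Icc]; omega)]
      ring

lemma sum_Icc_neg (g : ℤ → ℂ) (a b : ℤ) :
    ∑ m ∈ Finset.Icc a b, g (-m) = ∑ m ∈ Finset.Icc (-b) (-a), g m := by
  apply Finset.sum_nbij' (fun m => -m) (fun m => -m) <;>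
    simp_all [Finset.mem_Icc] <;> omega

lemma sum_Icc_split (g : ℤ → ℂ) (N : ℕ) :
    ∑ m ∈ Finset.Icc (-(N : ℤ)) N, g m =
      (∑ m ∈ Finset.Icc (-(N : ℤ)) (-1), g m) + ∑ m ∈ Finset.Icc (0 : ℤ) N, g m := by
  rw [← Finset.sum_union]
  · congr 1
    ext m
    simp only [Finset.mem_union, Finset.mem_Icc]
    omega
  · rw [Finset.disjoint_left]
    intro m hm hm'
    simp only [Finset.mem_Icc] at hm hm'
    omega

/-- A function on an abelian group is positive definite if all the
associated quadratic forms are nonnegative (as complex numbers, i.e.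
real and nonnegative). -/
def IsPosDef {G : Type*} [AddCommGroup G] (f : G → ℂ) : Prop :=
  ∀ (n : ℕ) (x : Fin n → G) (c : Fin n → ℂ),
    0 ≤ ∑ j, ∑ k, c j * (starRingEnd ℂ) (c k) * f (x j - x k)

theorem stmt6 (N : ℕ) (ψ : ℤ → ℂ) (hsupp : ∀ n : ℤ, (N : ℤ) < |n| → ψ n = 0) :
    IsPosDef ψ ↔
      ∀ t : ℝ, 0 ≤ ∑ n ∈ Finset.Icc (-(N : ℤ)) (N : ℤ),
        ψ n * Complex.exp (2 * Real.pi * Complex.I * (n : ℂ) * (t : ℂ)) := by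
  constructor
  · intro hpd t
    set g : ℤ → ℂ := fun m => ψ m * ee ((m : ℂ) * (t : ℂ)) with hg
    have hgz : ∀ m : ℤ, (N : ℤ) < |m| → g m = 0 := by
      intro m hm; rw [hg]; simp [hsupp m hm]
    have hee : ∀ n : ℤ, ψ n * Complex.exp (2 * Real.pi * Complex.I * (n : ℂ) * (t : ℂ)) = g n := by
      intro n
      rw [hg]
      simp only [ee]
      ring_nf
    rw [Finset.sum_congr rfl (fun n _ => hee n)]
    set T : ℂ := ∑ n ∈ Finset.Icc (-(N : ℤ)) N, g n with hT
    set S : ℕ → ℂ := fun M => ∑ j ∈ range M, ∑ k ∈ range M, g ((j : ℤ) - (k : ℤ)) with hS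
    -- positivity of S M
    have hSnn : ∀ M : ℕ, 0 ≤ S M := by
      intro M
      have key := hpd M (fun j => (j : ℤ)) (fun j => ee ((j : ℤ) * (t : ℂ)))
      have e1 : ∀ j k : ℕ, ee ((j : ℤ) * (t : ℂ)) * (starRingEnd ℂ) (ee ((k : ℤ) * (t : ℂ))) *
          ψ ((j : ℤ) - (k : ℤ)) = g ((j : ℤ) - (k : ℤ)) := by
        intro j k
        rw [ee_conj (by simp), ← ee_add, hg]
        have : ((j : ℤ) : ℂ) * (t : ℂ) + -(((k : ℤ) : ℂ) * (t : ℂ)) =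
            (((j : ℤ) - (k : ℤ) : ℤ) : ℂ) * (t : ℂ) := by push_cast; ring
        rw [this]
        ring
      have e2 : S M = ∑ j : Fin M, ∑ k : Fin M,
          ee (((j : ℕ) : ℤ) * (t : ℂ)) * (starRingEnd ℂ) (ee (((k : ℕ) : ℤ) * (t : ℂ))) *
            ψ (((j : ℕ) : ℤ) - ((k : ℕ) : ℤ)) := by
        simp only [hS]
        rw [← Fin.sum_univ_eq_sum_range (fun j => ∑ k ∈ range M, g ((j : ℤ) - (k : ℤ))) M]
        refine Finset.sum_congr rfl fun j _ => ?_
        rw [← Fin.sum_univ_eq_sum_range (fun k => g (((j : ℕ) : ℤ) - (k : ℤ))) M]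
        exact Finset.sum_congr rfl fun k _ => (e1 j k).symm
      rw [e2]
      exact key
    -- recursion
    have hrec : ∀ M : ℕ, N ≤ M → S (M + 1) = S M + T := by
      intro M hM
      have hA : ∑ j ∈ range M, g ((j : ℤ) - (M : ℤ)) = ∑ m ∈ Finset.Icc (-(N : ℤ)) (-1), g m := by
        have h1 : ∑ j ∈ range M, g ((j : ℤ) - (M : ℤ)) = ∑ j ∈ range M, g (-(M : ℤ) + (j : ℤ)) := by
          refine Finset.sum_congr rfl fun j _ => ?_; congr 1; ring
        rw [h1, sum_range_eq_sum_Icc g (-(M : ℤ)) M]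
        have h2 : -(M : ℤ) + M - 1 = -1 := by ring
        rw [h2]
        symm
        apply Finset.sum_subset
        · intro m hm
          simp only [Finset.mem_Icc] at hm ⊢
          omega
        · intro m hm hm'
          simp only [Finset.mem_Icc] at hm hm'
          refine hgz m ?_
          rcases abs_cases m with ⟨h1, h2⟩ | ⟨h1, h2⟩ <;> omega
      have hB : ∑ k ∈ range (M + 1), g ((M : ℤ) - (k : ℤ)) = ∑ m ∈ Finset.Icc (0 : ℤ) N, g m := by
        have h1 : ∑ k ∈ range (M + 1), g ((M : ℤ) - (k : ℤ)) =
            ∑ k ∈ range (M + 1), (fun m => g (-m)) (-(M : ℤ) + (k : ℤ)) := by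
          refine Finset.sum_congr rfl fun k _ => ?_; congr 1; ring
        rw [h1, sum_range_eq_sum_Icc (fun m => g (-m)) (-(M : ℤ)) (M + 1)]
        have h2 : -(M : ℤ) + (M + 1 : ℕ) - 1 = 0 := by push_cast; ring
        rw [h2, sum_Icc_neg g (-(M : ℤ)) 0]
        simp only [neg_zero, neg_neg]
        symm
        apply Finset.sum_subset
        · intro m hm
          simp only [Finset.mem_Icc] at hm ⊢
          omega
        · intro m hm hm'
          simp only [Finset.mem_Icc] at hm hm'
          refine hgz m ?_
          rcases abs_cases m with ⟨h1, h2⟩ | ⟨h1, h2⟩ <;> omega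
      calc S (M + 1) = ∑ j ∈ range M, (∑ k ∈ range M, g ((j : ℤ) - (k : ℤ)) + g ((j : ℤ) - (M : ℤ)))
            + ∑ k ∈ range (M + 1), g ((M : ℤ) - (k : ℤ)) := by
            simp only [hS, Finset.sum_range_succ]
        _ = S M + (∑ j ∈ range M, g ((j : ℤ) - (M : ℤ))
            + ∑ k ∈ range (M + 1), g ((M : ℤ) - (k : ℤ))) := by
            rw [Finset.sum_add_distrib]; ring
        _ = S M + T := by rw [hA, hB, hT, sum_Icc_split g N]
    have hiter : ∀ k : ℕ, S (N + 1 + k) = S (N + 1) + (k : ℂ) * T := by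
      intro k
      induction k with
      | zero => simp
      | succ k ih =>
          have : N + 1 + (k + 1) = (N + 1 + k) + 1 := by omega
          rw [this, hrec (N + 1 + k) (by omega), ih]
          push_cast
          ring
    have him : ∀ M : ℕ, (S M).im = 0 := by
      intro M
      have h2 := (Complex.le_def.mp (hSnn M)).2
      simpa using h2.symm
    have hTim : T.im = 0 := by
      have h1 := hiter 1
      have h2 : T = S (N + 1 + 1) - S (N + 1) := by rw [h1]; push_cast; ring
      rw [h2]
      simp [Complex.sub_im, him]
    have hre : ∀ M : ℕ, 0 ≤ (S M).re := fun M => by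
      simpa using (Complex.le_def.mp (hSnn M)).1
    have hTre : 0 ≤ T.re := by
      by_contra hneg
      push_neg at hneg
      obtain ⟨k, hk⟩ := exists_nat_gt ((S (N + 1)).re / (-T.re))
      have hkre : (S (N + 1 + k)).re = (S (N + 1)).re + (k : ℝ) * T.re := by
        rw [hiter k]
        simp [Complex.add_re, Complex.mul_re, hTim]
      have h3 := hre (N + 1 + k)
      rw [hkre] at h3
      rw [div_lt_iff₀ (by linarith)] at hk
      nlinarith
    rw [Complex.le_def]
    exact ⟨by simpa using hTre, by simpa using hTim.symm⟩

  · intro h n x c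
    classical
    set A : ℕ := ∑ j, (x j).natAbs with hA
    set M : ℕ := N + 1 + 2 * A with hM
    have hM0 : 0 < M := by omega
    have hMC : (M : ℂ) ≠ 0 := Nat.cast_ne_zero.mpr hM0.ne'
    -- the trig polynomial evaluated at l/M
    set Tv : ℕ → ℂ := fun l => ∑ m ∈ Finset.Icc (-(N : ℤ)) N,
        ψ m * ee ((m : ℂ) * (l : ℂ) / (M : ℂ)) with hTv
    have hTnn : ∀ l : ℕ, 0 ≤ Tv l := by
      intro l
      refine le_of_le_of_eq (h ((l : ℝ) / (M : ℝ))) (Finset.sum_congr rfl fun m _ => ?_)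
      congr 1
      rw [ee]
      congr 1
      push_cast
      ring
    -- Fourier inversion (finite form)
    have hrec : ∀ m : ℤ, m.natAbs ≤ 2 * A →
        ∑ l ∈ range M, Tv l * ee (-((m : ℂ) * (l : ℂ)) / (M : ℂ)) = (M : ℂ) * ψ m := by
      intro m hm
      have step1 : ∀ l : ℕ, Tv l * ee (-((m : ℂ) * (l : ℂ)) / (M : ℂ)) =
          ∑ p ∈ Finset.Icc (-(N : ℤ)) N, ψ p * ee (((p - m : ℤ) : ℂ) * (l : ℂ) / (M : ℂ)) := by
        intro l
        rw [hTv, Finset.sum_mul]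
        refine Finset.sum_congr rfl fun p _ => ?_
        rw [mul_assoc, ← ee_add]
        congr 2
        push_cast
        ring
      simp only [step1]
      rw [Finset.sum_comm]
      have step2 : ∀ p ∈ Finset.Icc (-(N : ℤ)) N,
          ∑ l ∈ range M, ψ p * ee (((p - m : ℤ) : ℂ) * (l : ℂ) / (M : ℂ)) =
            if p = m then ψ p * M else 0 := by
        intro p hp
        rw [← Finset.mul_sum, geom M hM0 (p - m)]
        simp only [Finset.mem_Icc] at hp
        by_cases hpm : p = m
        · have : (M : ℤ) ∣ (p - m) := by simp [hpm]
          rw [if_pos this, if_pos hpm]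
        · have hne : p - m ≠ 0 := sub_ne_zero.mpr hpm
          have : ¬ (M : ℤ) ∣ (p - m) := by
            intro hdvd
            have h1 : (M : ℤ) ≤ |p - m| := Int.le_of_dvd (abs_pos.mpr hne) ((dvd_abs _ _).mpr hdvd)
            have h2 : |p - m| ≤ (N : ℤ) + 2 * A := by
              rcases abs_cases (p - m) with ⟨e1, e2⟩ | ⟨e1, e2⟩ <;> omega
            omega
          rw [if_neg this, if_neg hpm, mul_zero]
      rw [Finset.sum_congr rfl step2, Finset.sum_ite_eq' (Finset.Icc (-(N : ℤ)) N) m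
        (fun p => ψ p * M)]
      by_cases hmem : m ∈ Finset.Icc (-(N : ℤ)) N
      · rw [if_pos hmem]; ring
      · rw [if_neg hmem]
        have : ψ m = 0 := by
          apply hsupp
          simp only [Finset.mem_Icc] at hmem
          rcases abs_cases m with ⟨e1, e2⟩ | ⟨e1, e2⟩ <;> omega
        rw [this, mul_zero]
    -- bound on differences
    have hbound : ∀ j k : Fin n, (x j - x k).natAbs ≤ 2 * A := by
      intro j k
      have h1 : (x j).natAbs ≤ A :=
        Finset.single_le_sum (f := fun j => (x j).natAbs) (fun _ _ => Nat.zero_le _)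
          (Finset.mem_univ j)
      have h2 : (x k).natAbs ≤ A :=
        Finset.single_le_sum (f := fun j => (x j).natAbs) (fun _ _ => Nat.zero_le _)
          (Finset.mem_univ k)
      calc (x j - x k).natAbs ≤ (x j).natAbs + (x k).natAbs := Int.natAbs_sub_le _ _
        _ ≤ 2 * A := by omega
    -- the weights
    set a : ℕ → Fin n → ℂ := fun l j => c j * ee (-((x j : ℂ) * (l : ℂ)) / (M : ℂ)) with ha
    set z : ℕ → ℂ := fun l => ∑ j, a l j with hz
    have step3 : ∀ (l : ℕ) (j k : Fin n), a l j * (starRingEnd ℂ) (a l k) =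
        c j * (starRingEnd ℂ) (c k) * ee (-(((x j - x k : ℤ) : ℂ) * (l : ℂ)) / (M : ℂ)) := by
      intro l j k
      rw [ha]
      simp only
      rw [map_mul, ee_conj (by
        rw [map_div₀, map_neg, map_mul]
        simp)]
      rw [mul_mul_mul_comm, ← ee_add]
      congr 2
      push_cast
      ring
    have main : (M : ℂ) * (∑ j, ∑ k, c j * (starRingEnd ℂ) (c k) * ψ (x j - x k)) =
        ∑ l ∈ range M, Tv l * (z l * (starRingEnd ℂ) (z l)) := by
      rw [Finset.mul_sum]
      calc ∑ j, (M : ℂ) * ∑ k, c j * (starRingEnd ℂ) (c k) * ψ (x j - x k)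
          = ∑ j, ∑ k, ∑ l ∈ range M,
              c j * (starRingEnd ℂ) (c k) * (Tv l * ee (-(((x j - x k : ℤ) : ℂ) * (l : ℂ)) / (M : ℂ))) := by
            refine Finset.sum_congr rfl fun j _ => ?_
            rw [Finset.mul_sum]
            refine Finset.sum_congr rfl fun k _ => ?_
            rw [← Finset.mul_sum, hrec (x j - x k) (hbound j k)]
            ring
        _ = ∑ l ∈ range M, ∑ j, ∑ k,
              c j * (starRingEnd ℂ) (c k) * (Tv l * ee (-(((x j - x k : ℤ) : ℂ) * (l : ℂ)) / (M : ℂ))) := by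
            rw [Finset.sum_congr rfl fun j _ => (Finset.sum_comm : ∑ k, ∑ l ∈ range M,
              c j * (starRingEnd ℂ) (c k) * (Tv l * ee (-(((x j - x k : ℤ) : ℂ) * (l : ℂ)) / (M : ℂ)))
                = _)]
            exact Finset.sum_comm
        _ = ∑ l ∈ range M, Tv l * (z l * (starRingEnd ℂ) (z l)) := by
            refine Finset.sum_congr rfl fun l _ => ?_
            rw [hz]
            simp only
            rw [map_sum, Finset.sum_mul_sum]
            rw [Finset.mul_sum]
            refine Finset.sum_congr rfl fun j _ => ?_
            rw [Finset.mul_sum]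
            refine Finset.sum_congr rfl fun k _ => ?_
            rw [step3 l j k]
            ring
    -- conclude
    have hnn : 0 ≤ ∑ l ∈ range M, Tv l * (z l * (starRingEnd ℂ) (z l)) := by
      refine Finset.sum_nonneg fun l _ => ?_
      refine mul_nonneg (hTnn l) ?_
      rw [Complex.mul_conj]
      exact_mod_cast Complex.normSq_nonneg (z l)
    have hfin : (0 : ℂ) ≤ (M : ℂ) * (∑ j, ∑ k, c j * (starRingEnd ℂ) (c k) * ψ (x j - x k)) := by
      rw [main]; exact hnn
    have hinv : (0 : ℂ) ≤ Complex.ofReal ((M : ℝ)⁻¹) := by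
      rw [Complex.zero_le_real]
      positivity
    have := mul_nonneg hinv hfin
    rw [← mul_assoc] at this
    have hMc : Complex.ofReal ((M : ℝ)⁻¹) * (M : ℂ) = 1 := by
      push_cast
      field_simp
    rwa [hMc, one_mul] at this
end
end

section
/- If ψ : ℤ → ℂ is a positive definite sequence supported in [-N, N], then there exists a sequence θ : ℤ → ℂ supported in [0, N] with ψ = θ ⋆ θ̃, i.e., ψ(n) = ∑_{k ∈ ℤ} θ(k) · conj(θ(k - n)) for all n ∈ ℤ. -/
/-!
Positive definiteness gives the Fejér means `∑_{|n| < M} (1 - |n|/M) ψ(n) z^n ≥ 0` on the unit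
circle, hence the trigonometric polynomial `T(z) = ∑ ψ(n) z^n` is nonnegative there, and
`ψ(-n) = conj ψ(n)`. Then `q(z) = z^N T(z)` is a polynomial of degree `≤ 2N` fixed by
`p ↦ p^♯(z) = z^{2N} conj (p (1/conj z))`. Its roots off the circle come in pairs `r, 1/conj r`,
and its roots on the circle are double, because `T ≥ 0` has a minimum there. Since `(z - r)^♯`
vanishes at `1/conj r`, peeling off one factor `(z - r)(z - r)^♯` at a time (Fejér–Riesz) gives
`q = P · P^♯` with `deg P ≤ N`, and the coefficients of `P` are the required `θ`.
-/

open Complex ComplexOrder Finset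

noncomputable section

open Polynomial Filter Topology

lemma HasDerivAt.eq_zero_of_forall_nonneg {f : ℝ → ℂ} {f' : ℂ} {a : ℝ} (hf : HasDerivAt f f' a)
    (ha : f a = 0) (hnn : ∀ t, 0 ≤ f t) : f' = 0 := by
  have hslope := hasDerivAt_iff_tendsto_slope.mp hf
  have hslope_eq : ∀ t, slope f a t = ((t - a)⁻¹ : ℝ) * f t := by
    intro t; rw [slope_def_module, ha, sub_zero, Complex.real_smul]
  apply le_antisymm
  · have hleft : 𝓝[<] a ≤ 𝓝[≠] a := nhdsWithin_mono _ fun t ht => ne_of_lt ht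
    refine le_of_tendsto (hslope.mono_left hleft) ?_
    filter_upwards [self_mem_nhdsWithin] with t (ht : t < a)
    rw [hslope_eq]
    exact mul_nonpos_of_nonpos_of_nonneg
      (by exact_mod_cast (inv_nonpos.mpr (sub_neg.mpr ht).le)) (hnn t)
  · have hright : 𝓝[>] a ≤ 𝓝[≠] a := nhdsWithin_mono _ fun t ht => ne_of_gt ht
    refine ge_of_tendsto (hslope.mono_left hright) ?_
    filter_upwards [self_mem_nhdsWithin] with t (ht : a < t)
    rw [hslope_eq]
    exact mul_nonneg (Complex.zero_le_real.mpr (inv_nonneg.mpr (sub_pos.mpr ht).le)) (hnn t)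

lemma circleMap_arg {z : ℂ} (hz : ‖z‖ = 1) : circleMap 0 1 (arg z) = z := by
  simpa [circleMap_zero, hz] using norm_mul_exp_arg_mul_I z

lemma nonneg_of_forall_ne_of_norm_eq_one {f : ℂ → ℂ} (hf : Continuous f) {z : ℂ} (hz : ‖z‖ = 1)
    (h : ∀ w : ℂ, ‖w‖ = 1 → w ≠ z → 0 ≤ f w) : 0 ≤ f z := by
  have hlim : Tendsto (f ∘ circleMap 0 1) (𝓝[≠] (arg z)) (𝓝 (f z)) := by
    rw [← congrArg f (circleMap_arg hz)]
    exact ((hf.comp (continuous_circleMap 0 1)).tendsto _).mono_left nhdsWithin_le_nhds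
  refine ge_of_tendsto hlim ?_
  filter_upwards [self_mem_nhdsWithin,
    nhdsWithin_le_nhds (Metric.ball_mem_nhds (arg z) Real.two_pi_pos)] with t ht hdist
  refine h _ (by simp) fun heq => ht ?_
  rw [← circleMap_arg hz] at heq
  exact eq_of_circleMap_eq one_ne_zero (by simpa [Real.dist_eq] using hdist) heq

lemma Finset.sum_Icc_int_eq_sum_range {M : Type*} [AddCommMonoid M] (a : ℤ) (m : ℕ) (f : ℤ → M) :
    ∑ k ∈ Icc a (a + m), f k = ∑ i ∈ range (m + 1), f (a + i) := by
  refine sum_nbij' (fun k => (k - a).toNat) (fun i => a + i) ?_ ?_ ?_ ?_ ?_ <;>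
    intro k hk <;> simp only [mem_Icc, mem_range] at hk ⊢
  all_goals first | omega | (congr 1; omega)

lemma card_filter_natCast_sub_eq (M : ℕ) (n : ℤ) :
    #{p ∈ range M ×ˢ range M | (p.1 : ℤ) - p.2 = n} = M - n.natAbs := by
  rw [← card_range (M - n.natAbs)]
  refine card_nbij' (fun p => p.2 - (-n).toNat) (fun i => (i + n.toNat, i + (-n).toNat))
    ?_ ?_ ?_ ?_ <;> intro p hp <;>
    simp only [coe_filter, coe_range, mem_product, mem_range, Set.mem_ofPred_eq, Set.mem_Iio,
      Prod.ext_iff] at hp ⊢ <;> omega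

lemma sum_range_sum_range_natCast_sub {R : Type*} [CommSemiring R] (M : ℕ) (g : ℤ → R) :
    ∑ j ∈ range M, ∑ k ∈ range M, g (j - k)
      = ∑ n ∈ Icc (-M : ℤ) M, ((M - n.natAbs : ℕ) : R) * g n := by
  rw [← sum_product', ← sum_fiberwise_of_maps_to (g := fun p : ℕ × ℕ => (p.1 : ℤ) - p.2)
    (t := Icc (-M : ℤ) M) (fun p hp => by simp only [mem_product, mem_range] at hp; simp; omega)]
  refine sum_congr rfl fun n _ => ?_
  rw [sum_congr rfl fun p hp => by rw [(mem_filter.1 hp).2], sum_const,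
    card_filter_natCast_sub_eq, nsmul_eq_mul]

lemma IsPosDef.map_neg {G : Type*} [AddCommGroup G] {f : G → ℂ} (hf : IsPosDef f) (x : G) :
    f (-x) = starRingEnd ℂ (f x) := by
  have him : ∀ (n : ℕ) (x : Fin n → G) (c : Fin n → ℂ),
      (∑ j, ∑ k, c j * starRingEnd ℂ (c k) * f (x j - x k)).im = 0 :=
    fun n x c => (Complex.le_def.1 (hf n x c)).2.symm
  have h1 : (f 0).im = 0 := by simpa using him 1 ![0] ![1]
  have h2 : (f (-x)).im + (f x).im = 0 := by
    simpa [Fin.sum_univ_two, h1] using him 2 ![0, x] ![1, 1]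
  have h3 : (f x).re - (f (-x)).re = 0 := by
    simpa [Fin.sum_univ_two, h1, sub_eq_neg_add] using him 2 ![0, x] ![1, I]
  apply Complex.ext <;> simp only [conj_re, conj_im] <;> linarith

lemma IsPosDef.sum_mul_zpow_nonneg {N : ℕ} {ψ : ℤ → ℂ} (hψ : IsPosDef ψ)
    (hsupp : ∀ n : ℤ, (N : ℤ) < |n| → ψ n = 0) {z : ℂ} (hz : ‖z‖ = 1) :
    0 ≤ ∑ n ∈ Icc (-N : ℤ) N, ψ n * z ^ n := by
  have hz0 : z ≠ 0 := norm_ne_zero_iff.1 (hz ▸ one_ne_zero)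
  set g : ℤ → ℂ := fun n => ψ n * z ^ n
  have hfejer : ∀ M : ℕ, 0 ≤ ∑ n ∈ Icc (-M : ℤ) M, ((M - n.natAbs : ℕ) : ℂ) * g n := by
    intro M
    rw [← sum_range_sum_range_natCast_sub]
    convert hψ M (fun j => (j : ℤ)) (fun j => z ^ (j : ℕ)) using 1
    simp only [sum_range, g]
    refine sum_congr rfl fun j _ => sum_congr rfl fun k _ => ?_
    rw [zpow_sub₀ hz0, zpow_natCast, zpow_natCast, map_pow, ← inv_eq_conj hz, inv_pow]
    ring
  set T := ∑ n ∈ Icc (-N : ℤ) N, g n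
  set S := ∑ n ∈ Icc (-N : ℤ) N, (n.natAbs : ℂ) * g n
  have hlarge : ∀ M : ℕ, N ≤ M →
      ∑ n ∈ Icc (-M : ℤ) M, ((M - n.natAbs : ℕ) : ℂ) * g n = M * T - S := by
    intro M hM
    have hsub : Icc (-N : ℤ) N ⊆ Icc (-M : ℤ) M := Icc_subset_Icc (by omega) (by omega)
    rw [← sum_subset hsub fun n _ hn => by
        simp only [mem_Icc] at hn; simp [g, hsupp n (lt_abs.2 (by omega))],
      mul_sum, ← sum_sub_distrib]
    refine sum_congr rfl fun n hn => ?_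
    rw [Nat.cast_sub (by simp only [mem_Icc] at hn; omega)]
    ring
  have hlim : Tendsto (fun M : ℕ => T - S / M) atTop (𝓝 T) := by
    simpa using tendsto_const_nhds.sub (tendsto_const_div_atTop_nhds_zero_nat S)
  refine ge_of_tendsto hlim ?_
  filter_upwards [eventually_ge_atTop (N + 1)] with M hM
  have hMpos : (0 : ℝ) < M := by exact_mod_cast (by omega : 0 < M)
  calc 0 ≤ (((M : ℝ)⁻¹ : ℝ) : ℂ) * (M * T - S) :=
        mul_nonneg (by exact_mod_cast (inv_pos.2 hMpos).le) (hlarge M (by omega) ▸ hfejer M)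
    _ = T - S / M := by
        have : (M : ℂ) ≠ 0 := by exact_mod_cast hMpos.ne'
        push_cast
        field_simp

namespace Polynomial

lemma eq_of_isRoot_of_natDegree_le_one {K : Type*} [Field K] {p : K[X]} (hp : p.natDegree ≤ 1)
    (hp0 : p ≠ 0) {z w : K} (hz : p.IsRoot z) (hw : p.IsRoot w) : z = w := by
  obtain ⟨a, b, rfl⟩ := exists_eq_X_add_C_of_natDegree_le_one hp
  simp only [IsRoot, eval_add, eval_mul, eval_C, eval_X] at hz hw
  by_contra hzw
  have ha : a = 0 :=
    (mul_eq_zero.1 (by linear_combination hz - hw : a * (z - w) = 0)).resolve_right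
      (sub_ne_zero.2 hzw)
  simp_all

lemma X_sub_C_mul_X_sub_C_dvd {K : Type*} [Field K] {p : K[X]} {r s : K} (hr : p.IsRoot r)
    (hs : p.IsRoot s) (hrs : r = s → (derivative p).IsRoot r) : (X - C r) * (X - C s) ∣ p := by
  obtain ⟨g, rfl⟩ := dvd_iff_isRoot.2 hr
  refine mul_dvd_mul_left _ (dvd_iff_isRoot.2 ?_)
  by_cases h : r = s
  · subst h
    simpa [derivative_mul] using hrs rfl
  · simpa [IsRoot, sub_ne_zero.2 (Ne.symm h)] using hs

def conjReflect (N : ℕ) (p : ℂ[X]) : ℂ[X] := reflect N (p.map (starRingEnd ℂ))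

@[simp]
lemma coeff_conjReflect (N : ℕ) (p : ℂ[X]) (j : ℕ) :
    (conjReflect N p).coeff j = starRingEnd ℂ (p.coeff (revAt N j)) := by
  simp [conjReflect, coeff_reflect]

@[simp]
lemma conjReflect_zero (N : ℕ) : conjReflect N 0 = 0 := by
  ext; simp

@[simp]
lemma conjReflect_conjReflect (N : ℕ) (p : ℂ[X]) : conjReflect N (conjReflect N p) = p := by
  ext j; simp [revAt_invol]

lemma conjReflect_ne_zero {N : ℕ} {p : ℂ[X]} (hp : p ≠ 0) : conjReflect N p ≠ 0 := by
  intro h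
  exact hp (by simpa [h] using (conjReflect_conjReflect N p).symm)

lemma natDegree_conjReflect_le {N : ℕ} {p : ℂ[X]} (hp : p.natDegree ≤ N) :
    (conjReflect N p).natDegree ≤ N :=
  natDegree_reflect_le.trans (by simpa [natDegree_map] using hp)

lemma conjReflect_mul {M N : ℕ} {p q : ℂ[X]} (hp : p.natDegree ≤ M) (hq : q.natDegree ≤ N) :
    conjReflect (M + N) (p * q) = conjReflect M p * conjReflect N q := by
  rw [conjReflect, Polynomial.map_mul, reflect_mul _ _ (by simpa [natDegree_map])
    (by simpa [natDegree_map])]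
  rfl

lemma eval_map_conj (p : ℂ[X]) (w : ℂ) :
    (p.map (starRingEnd ℂ)).eval w = starRingEnd ℂ (p.eval (starRingEnd ℂ w)) := by
  rw [eval_map, ← eval₂_at_apply, Complex.conj_conj]

lemma eval_conjReflect {N : ℕ} {p : ℂ[X]} (hp : p.natDegree ≤ N) {w : ℂ} (hw : w ≠ 0) :
    (conjReflect N p).eval w = w ^ N * starRingEnd ℂ (p.eval (starRingEnd ℂ w)⁻¹) := by
  let := invertibleOfNonzero (inv_ne_zero hw)
  have h := eval₂_reflect_mul_pow (RingHom.id ℂ) w⁻¹ N (p.map (starRingEnd ℂ))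
    (by simpa [natDegree_map] using hp)
  rw [invOf_eq_inv, inv_inv, ← eval, ← eval, eval_map_conj, map_inv₀] at h
  rw [conjReflect, ← h, mul_comm, mul_assoc, ← mul_pow, inv_mul_cancel₀ hw, one_pow, mul_one]

lemma eval_conjReflect_of_norm_eq_one {N : ℕ} {p : ℂ[X]} (hp : p.natDegree ≤ N) {z : ℂ}
    (hz : ‖z‖ = 1) : (conjReflect N p).eval z = z ^ N * starRingEnd ℂ (p.eval z) := by
  have hz0 : z ≠ 0 := norm_ne_zero_iff.1 (hz ▸ one_ne_zero)
  rw [eval_conjReflect hp hz0, ← Complex.inv_eq_conj hz, inv_inv]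

lemma conjReflect_one_one : conjReflect 1 1 = X := by
  simp [conjReflect, reflect_one]

lemma conjReflect_one_X_sub_C {r : ℂ} (hr : r ≠ 0) :
    conjReflect 1 (X - C r) = C (-starRingEnd ℂ r) * (X - C (starRingEnd ℂ r)⁻¹) := by
  ext (_ | _ | n) <;> simp [coeff_X, coeff_C, revAt_le, revAt_eq_self_of_lt, hr]

lemma conjReflect_mul_conjReflect_self {N : ℕ} {P : ℂ[X]} (hP : P.natDegree ≤ N) :
    conjReflect (N + N) (P * conjReflect N P) = P * conjReflect N P := by
  rw [conjReflect_mul hP (natDegree_conjReflect_le hP), conjReflect_conjReflect, mul_comm]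

lemma eval_mul_conjReflect_self {N : ℕ} {P : ℂ[X]} (hP : P.natDegree ≤ N) {z : ℂ} (hz : ‖z‖ = 1) :
    starRingEnd ℂ z ^ N * (P * conjReflect N P).eval z = normSq (P.eval z) := by
  rw [eval_mul, eval_conjReflect_of_norm_eq_one hP hz]
  calc starRingEnd ℂ z ^ N * (P.eval z * (z ^ N * starRingEnd ℂ (P.eval z)))
      = (starRingEnd ℂ z * z) ^ N * (P.eval z * starRingEnd ℂ (P.eval z)) := by ring
    _ = normSq (P.eval z) := by rw [conj_mul', hz, mul_conj]; simp

lemma isRoot_inv_conj_of_conjReflect_eq_self {M : ℕ} {q : ℂ[X]} (hdeg : q.natDegree ≤ M)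
    (hsym : conjReflect M q = q) {r : ℂ} (hr : q.IsRoot r) (hr0 : r ≠ 0) :
    q.IsRoot (starRingEnd ℂ r)⁻¹ := by
  rw [IsRoot, ← hsym, eval_conjReflect hdeg (by simpa using hr0)]
  simp [map_inv₀, hr.eq_zero]

-- On the circle `conj z ^ N = z ^ (-N)`: for `deg q ≤ 2N` this says that the trigonometric
-- polynomial `z ^ (-N) * q z` is nonnegative.
def IsNonnegOnCircle (N : ℕ) (q : ℂ[X]) : Prop :=
  ∀ z : ℂ, ‖z‖ = 1 → 0 ≤ starRingEnd ℂ z ^ N * q.eval z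

lemma IsNonnegOnCircle.isRoot_derivative {N : ℕ} {q : ℂ[X]} (hq : IsNonnegOnCircle N q) {r : ℂ}
    (hr : ‖r‖ = 1) (hroot : q.IsRoot r) : (derivative q).IsRoot r := by
  have hγ := hasDerivAt_circleMap 0 1 (arg r)
  have hF := (hγ.star.pow N).mul ((q.hasDerivAt _).comp (arg r) hγ)
  simp only [Function.comp_def, circleMap_arg hr, hroot.eq_zero, mul_zero, zero_add] at hF
  have h0 := hF.eq_zero_of_forall_nonneg (by simp [circleMap_arg hr, hroot.eq_zero])
    fun t => hq _ (by simp)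
  have hr0 : r ≠ 0 := norm_ne_zero_iff.1 (hr ▸ one_ne_zero)
  simpa [hr0, I_ne_zero] using h0

lemma coeff_eq_conj_coeff_zero_of_conjReflect_eq_self {M : ℕ} {q : ℂ[X]}
    (hsym : conjReflect M q = q) : q.coeff M = starRingEnd ℂ (q.coeff 0) := by
  conv_lhs => rw [← hsym]
  rw [coeff_conjReflect, revAt_le le_rfl, Nat.sub_self]

lemma norm_eq_one_of_eq_inv_conj {r : ℂ} (hr0 : r ≠ 0) (h : r = (starRingEnd ℂ r)⁻¹) :
    ‖r‖ = 1 := by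
  have : r * starRingEnd ℂ r = 1 := by
    nth_rewrite 1 [h]; exact inv_mul_cancel₀ (by simpa using hr0)
  rw [mul_conj, ← ofReal_one, ofReal_inj, normSq_eq_norm_sq] at this
  exact (pow_eq_one_iff_of_nonneg (norm_nonneg r) two_ne_zero).1 this

lemma X_sub_C_mul_conjReflect_dvd {N : ℕ} {q : ℂ[X]} (hdeg : q.natDegree ≤ 2 * N)
    (hsym : conjReflect (2 * N) q = q) (hnn : IsNonnegOnCircle N q) {r : ℂ} (hr : q.IsRoot r)
    (hr0 : r ≠ 0) : (X - C r) * conjReflect 1 (X - C r) ∣ q := by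
  rw [conjReflect_one_X_sub_C hr0, mul_left_comm,
    (isUnit_C.2 (by simpa using hr0 : -starRingEnd ℂ r ≠ 0).isUnit).mul_left_dvd]
  exact X_sub_C_mul_X_sub_C_dvd hr (isRoot_inv_conj_of_conjReflect_eq_self hdeg hsym hr hr0)
    fun hrs => hnn.isRoot_derivative (norm_eq_one_of_eq_inv_conj hr0 hrs) hr

lemma natDegree_X_sub_C_mul_conjReflect {r : ℂ} (hr0 : r ≠ 0) :
    ((X - C r) * conjReflect 1 (X - C r)).natDegree = 2 := by
  have hc : -starRingEnd ℂ r ≠ 0 := by simpa using hr0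
  rw [conjReflect_one_X_sub_C hr0, natDegree_mul (X_sub_C_ne_zero r)
    (mul_ne_zero (C_ne_zero.2 hc) (X_sub_C_ne_zero _)), natDegree_C_mul hc, natDegree_X_sub_C,
    natDegree_X_sub_C]

lemma exists_eq_mul_conjReflect_mul {N : ℕ} {q : ℂ[X]} (hdeg : q.natDegree ≤ 2 * N + 2)
    (hsym : conjReflect (2 * N + 2) q = q) (hnn : IsNonnegOnCircle (N + 1) q) :
    ∃ L q₁ : ℂ[X], L.natDegree ≤ 1 ∧ L ≠ 0 ∧ q₁.natDegree ≤ 2 * N ∧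
      q = L * conjReflect 1 L * q₁ := by
  have htop := coeff_eq_conj_coeff_zero_of_conjReflect_eq_self hsym
  by_cases h0 : q.coeff 0 = 0
  -- Then the top coefficient vanishes too, and `q` is divisible by `X = 1 * conjReflect 1 1`.
  · obtain ⟨q₁, rfl⟩ := X_dvd_iff.2 h0
    refine ⟨1, q₁, by simp, one_ne_zero, ?_, by simp [conjReflect_one_one]⟩
    rw [natDegree_le_iff_coeff_eq_zero]
    intro j hj
    rw [← coeff_X_mul]
    rcases (show j + 1 = 2 * N + 2 ∨ 2 * N + 2 < j + 1 by omega) with hj | hj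
    · rw [hj, htop, h0, map_zero]
    · exact coeff_eq_zero_of_natDegree_lt (hdeg.trans_lt hj)
  · have hq0 : q ≠ 0 := fun h => h0 (by simp [h])
    have hnat : q.natDegree = 2 * N + 2 :=
      natDegree_eq_of_le_of_coeff_ne_zero hdeg (by simpa [htop] using h0)
    obtain ⟨r, hr⟩ := IsAlgClosed.exists_root q (by
      rw [degree_eq_natDegree hq0, hnat]; exact_mod_cast (by omega : 2 * N + 2 ≠ 0))
    have hr0 : r ≠ 0 := by rintro rfl; exact h0 (by rw [coeff_zero_eq_eval_zero]; exact hr)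
    rw [show 2 * N + 2 = 2 * (N + 1) by ring] at hdeg hsym
    obtain ⟨q₁, rfl⟩ := X_sub_C_mul_conjReflect_dvd hdeg hsym hnn hr hr0
    refine ⟨X - C r, q₁, natDegree_X_sub_C_le r, X_sub_C_ne_zero r, ?_, rfl⟩
    rw [natDegree_mul (left_ne_zero_of_mul hq0) (right_ne_zero_of_mul hq0),
      natDegree_X_sub_C_mul_conjReflect hr0] at hnat
    omega

lemma conjReflect_eq_self_of_mul {N : ℕ} {L q : ℂ[X]} (hL : L.natDegree ≤ 1) (hL0 : L ≠ 0)
    (hq : q.natDegree ≤ 2 * N)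
    (hsym : conjReflect (2 * N + 2) (L * conjReflect 1 L * q) = L * conjReflect 1 L * q) :
    conjReflect (2 * N) q = q := by
  rw [show 2 * N + 2 = (1 + 1) + 2 * N by ring,
    conjReflect_mul (natDegree_mul_le.trans (add_le_add hL (natDegree_conjReflect_le hL))) hq,
    conjReflect_mul_conjReflect_self hL] at hsym
  exact mul_left_cancel₀ (mul_ne_zero hL0 (conjReflect_ne_zero hL0)) hsym

lemma IsNonnegOnCircle.of_mul {N : ℕ} {L q : ℂ[X]} (hL : L.natDegree ≤ 1) (hL0 : L ≠ 0)
    (hnn : IsNonnegOnCircle (N + 1) (L * conjReflect 1 L * q)) : IsNonnegOnCircle N q := by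
  have hoff : ∀ z : ℂ, ‖z‖ = 1 → ¬L.IsRoot z → 0 ≤ starRingEnd ℂ z ^ N * q.eval z := by
    intro z hz hLz
    have h := hnn z hz
    rw [eval_mul, show ∀ a b c : ℂ, a ^ (N + 1) * (b * c) = (a ^ 1 * b) * (a ^ N * c) by
      intros; ring, eval_mul_conjReflect_self hL hz] at h
    have hpos : 0 < normSq (L.eval z) := normSq_pos.2 hLz
    calc 0 ≤ ((normSq (L.eval z))⁻¹ : ℝ) * (normSq (L.eval z) * (starRingEnd ℂ z ^ N * q.eval z)) :=
          mul_nonneg (by exact_mod_cast (inv_pos.2 hpos).le) h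
      _ = starRingEnd ℂ z ^ N * q.eval z := by
          rw [← mul_assoc, ← ofReal_mul, inv_mul_cancel₀ hpos.ne', ofReal_one, one_mul]
  intro z hz
  by_cases hLz : L.IsRoot z
  · exact nonneg_of_forall_ne_of_norm_eq_one (f := fun w => starRingEnd ℂ w ^ N * q.eval w)
      (by fun_prop) hz fun w hw hwz =>
      hoff w hw fun hLw => hwz (eq_of_isRoot_of_natDegree_le_one hL hL0 hLw hLz)
  · exact hoff z hz hLz

theorem exists_eq_mul_conjReflect_self {N : ℕ} {q : ℂ[X]} (hdeg : q.natDegree ≤ 2 * N)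
    (hsym : conjReflect (2 * N) q = q) (hnn : IsNonnegOnCircle N q) :
    ∃ P : ℂ[X], P.natDegree ≤ N ∧ q = P * conjReflect N P := by
  induction N generalizing q with
  | zero =>
    obtain ⟨c, rfl⟩ : ∃ c, q = C c := ⟨_, eq_C_of_natDegree_le_zero hdeg⟩
    have hc : 0 ≤ c := by simpa using hnn 1 (by simp)
    refine ⟨C (Real.sqrt c.re : ℂ), by simp, ?_⟩
    rw [conjReflect, map_C, reflect_C, pow_zero, mul_one, ← C_mul, Complex.conj_ofReal,
      ← ofReal_mul, Real.mul_self_sqrt (Complex.le_def.1 hc).1, ← eq_re_of_ofReal_le hc]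
  | succ N ih =>
    rw [show 2 * (N + 1) = 2 * N + 2 by ring] at hdeg hsym
    obtain ⟨L, q₁, hL, hL0, hq₁, rfl⟩ := exists_eq_mul_conjReflect_mul hdeg hsym hnn
    obtain ⟨P₁, hP₁, rfl⟩ := ih hq₁ (conjReflect_eq_self_of_mul hL hL0 hq₁ hsym) (hnn.of_mul hL hL0)
    refine ⟨L * P₁, natDegree_mul_le.trans (by omega), ?_⟩
    rw [show N + 1 = 1 + N by ring, conjReflect_mul hL hP₁]
    ring

def intCoeff {R : Type*} [Semiring R] (p : R[X]) (k : ℤ) : R :=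
  if 0 ≤ k then p.coeff k.toNat else 0

section intCoeff

variable {R : Type*} [Semiring R] {p : R[X]}

@[simp]
lemma intCoeff_natCast (p : R[X]) (m : ℕ) : p.intCoeff m = p.coeff m := by
  simp [intCoeff]

lemma intCoeff_of_neg {k : ℤ} (hk : k < 0) : p.intCoeff k = 0 := by
  simp [intCoeff, not_le.2 hk]

lemma intCoeff_of_natDegree_lt {k : ℤ} (hk : (p.natDegree : ℤ) < k) : p.intCoeff k = 0 := by
  rw [intCoeff, if_pos (by omega), coeff_eq_zero_of_natDegree_lt (by omega)]

end intCoeff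

lemma coeff_conjReflect_eq_conj_intCoeff {N : ℕ} {P : ℂ[X]} (hP : P.natDegree ≤ N) (j : ℕ) :
    (conjReflect N P).coeff j = starRingEnd ℂ (P.intCoeff (N - j)) := by
  rw [coeff_conjReflect]
  rcases le_or_gt j N with hj | hj
  · rw [revAt_le hj, ← intCoeff_natCast, Nat.cast_sub hj]
  · rw [revAt_eq_self_of_lt hj, coeff_eq_zero_of_natDegree_lt (by omega),
      intCoeff_of_neg (by omega)]

lemma intCoeff_mul_conjReflect {N : ℕ} {P : ℂ[X]} (hP : P.natDegree ≤ N) (n : ℤ) :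
    (P * conjReflect N P).intCoeff (n + N)
      = ∑ k ∈ Icc (0 : ℤ) N, P.intCoeff k * starRingEnd ℂ (P.intCoeff (k - n)) := by
  rcases lt_or_ge (n + N) 0 with hn | hn
  · rw [intCoeff_of_neg hn]
    refine (sum_eq_zero fun k hk => ?_).symm
    rw [intCoeff_of_natDegree_lt (k := k - n) (by simp only [mem_Icc] at hk; omega), map_zero,
      mul_zero]
  obtain ⟨m, hm⟩ : ∃ m : ℕ, n + N = m := ⟨(n + N).toNat, by omega⟩
  rw [hm, intCoeff_natCast, coeff_mul, Nat.sum_antidiagonal_eq_sum_range_succ_mk]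
  calc ∑ i ∈ range (m + 1), P.coeff i * (conjReflect N P).coeff (m - i)
      = ∑ k ∈ Icc (0 : ℤ) (0 + m), P.intCoeff k * starRingEnd ℂ (P.intCoeff (k - n)) := by
        rw [sum_Icc_int_eq_sum_range]
        refine sum_congr rfl fun i hi => ?_
        rw [mem_range] at hi
        rw [coeff_conjReflect_eq_conj_intCoeff hP, zero_add, intCoeff_natCast,
          Nat.cast_sub (by omega)]
        congr 3
        omega
    _ = _ := by
        refine sum_congr_of_eq_on_inter (fun k hk hkN => ?_) (fun k hk hkm => ?_) fun _ _ _ => rfl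
        · simp only [mem_Icc] at hk hkN
          rw [intCoeff_of_natDegree_lt (by omega), zero_mul]
        · simp only [mem_Icc] at hk hkm
          rw [intCoeff_of_natDegree_lt (k := k - n) (by omega), map_zero, mul_zero]

-- `z ^ N * ∑ n ∈ [-N, N], ψ n * z ^ n`
def shiftedPoly (N : ℕ) (ψ : ℤ → ℂ) : ℂ[X] :=
  ∑ m ∈ range (2 * N + 1), monomial m (ψ (m - N))

section shiftedPoly

variable {N : ℕ} {ψ : ℤ → ℂ}

lemma natDegree_shiftedPoly_le : (shiftedPoly N ψ).natDegree ≤ 2 * N :=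
  natDegree_sum_le_of_forall_le _ _ fun _ hm =>
    (natDegree_monomial_le _).trans (Nat.lt_succ_iff.1 (mem_range.1 hm))

variable (hsupp : ∀ n : ℤ, (N : ℤ) < |n| → ψ n = 0)
include hsupp

lemma coeff_shiftedPoly (m : ℕ) : (shiftedPoly N ψ).coeff m = ψ (m - N) := by
  simp only [shiftedPoly, finsetSum_coeff, coeff_monomial, sum_ite_eq', mem_range]
  split_ifs with hm
  · rfl
  · rw [hsupp _ (lt_abs.2 (by omega))]

lemma intCoeff_shiftedPoly (n : ℤ) : (shiftedPoly N ψ).intCoeff (n + N) = ψ n := by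
  rcases lt_or_ge (n + N) 0 with hn | hn
  · rw [intCoeff_of_neg hn, hsupp n (lt_abs.2 (by omega))]
  · obtain ⟨m, hm⟩ : ∃ m : ℕ, n + N = m := ⟨(n + N).toNat, by omega⟩
    rw [hm, intCoeff_natCast, coeff_shiftedPoly hsupp, ← hm, add_sub_cancel_right]

lemma conjReflect_shiftedPoly (hψ : ∀ n, ψ (-n) = starRingEnd ℂ (ψ n)) :
    conjReflect (2 * N) (shiftedPoly N ψ) = shiftedPoly N ψ := by
  ext m
  rw [coeff_conjReflect, coeff_shiftedPoly hsupp, coeff_shiftedPoly hsupp]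
  rcases le_or_gt m (2 * N) with hm | hm
  · rw [revAt_le hm, show ((2 * N - m : ℕ) : ℤ) - N = -((m : ℤ) - N) by omega, hψ,
      Complex.conj_conj]
  · rw [revAt_eq_self_of_lt hm, hsupp _ (lt_abs.2 (by omega)), map_zero]

lemma isNonnegOnCircle_shiftedPoly (hψ : IsPosDef ψ) : IsNonnegOnCircle N (shiftedPoly N ψ) := by
  intro z hz
  have hz0 : z ≠ 0 := norm_ne_zero_iff.1 (hz ▸ one_ne_zero)
  convert hψ.sum_mul_zpow_nonneg hsupp hz using 1
  rw [shiftedPoly, eval_finsetSum, mul_sum,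
    show Icc (-N : ℤ) N = Icc (-N : ℤ) (-N + (2 * N : ℕ)) by congr 1; omega,
    sum_Icc_int_eq_sum_range]
  refine sum_congr rfl fun m _ => ?_
  rw [eval_monomial, ← inv_eq_conj hz, neg_add_eq_sub, zpow_sub₀ hz0, zpow_natCast, zpow_natCast,
    inv_pow]
  ring

end shiftedPoly

end Polynomial

theorem stmt10 (N : ℕ) (ψ : ℤ → ℂ) (hsupp : ∀ n : ℤ, (N : ℤ) < |n| → ψ n = 0)
    (hψ : IsPosDef ψ) :
    ∃ θ : ℤ → ℂ, (∀ k : ℤ, k < 0 ∨ (N : ℤ) < k → θ k = 0) ∧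
      ∀ n : ℤ, ψ n = ∑ k ∈ Finset.Icc (0 : ℤ) (N : ℤ),
        θ k * (starRingEnd ℂ) (θ (k - n)) := by
  obtain ⟨P, hP, hq⟩ := exists_eq_mul_conjReflect_self natDegree_shiftedPoly_le
    (conjReflect_shiftedPoly hsupp hψ.map_neg) (isNonnegOnCircle_shiftedPoly hsupp hψ)
  refine ⟨P.intCoeff, fun k hk => ?_, fun n => ?_⟩
  · rcases hk with hk | hk
    · exact intCoeff_of_neg hk
    · exact intCoeff_of_natDegree_lt (by omega)
  · rw [← intCoeff_mul_conjReflect hP, ← hq, intCoeff_shiftedPoly hsupp]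
end
end

section
/- For any m ∈ ℕ and any symmetric subset H ⊆ ℤ_m containing 0 and 1: cos(π/m) · 𝒞ℱ_m(H) ≤ 𝒦_m(H) ≤ 𝒞ℱ_m(H). -/
open Complex ComplexOrder Finset MeasureTheory

noncomputable section

/-!
Positive definiteness on a finite abelian group is preserved by multiplying with a character and
by taking real parts. Given a positive definite `φ` supported in `H`, multiply it by the character
`x ↦ exp (2πijx/m)`, where `j` is chosen so that the rotated phase of `φ 1` lies within `π/m` of
the real axis. The real part of the result is a real positive definite function supported in `H`,
and its value at `1` is at least `cos (π/m) * ‖φ 1‖`. The other inequality is trivial, because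
every real `φ` is also a complex one and `φ 1 ≤ ‖φ 1‖`.
-/

open ComplexConjugate

namespace IsPosDef

variable {G : Type*} [AddCommGroup G] {f : G → ℂ}

lemma two_point_nonneg (hf : IsPosDef f) (a b : G) (c d : ℂ) :
    0 ≤ c * conj c * f 0 + c * conj d * f (a - b) + d * conj c * f (b - a) + d * conj d * f 0 := by
  have h := hf 2 ![a, b] ![c, d]
  simp only [Fin.sum_univ_two, Matrix.cons_val_zero, Matrix.cons_val_one, sub_self] at h
  convert h using 1
  ring

lemma apply_neg (hf : IsPosDef f) (y : G) : f (-y) = conj (f y) := by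
  have h0 := (nonneg_iff.mp (hf.two_point_nonneg 0 0 1 0)).2
  have h1 := (nonneg_iff.mp (hf.two_point_nonneg y 0 1 1)).2
  have hI := (nonneg_iff.mp (hf.two_point_nonneg y 0 1 I)).2
  simp only [sub_zero, zero_sub, sub_self, map_one, map_zero, one_mul, mul_one, zero_mul,
    add_zero, conj_I, add_im, mul_im, mul_re, I_re, I_im, neg_re, neg_im] at h0 h1 hI
  apply Complex.ext <;> simp only [conj_re, conj_im] <;> linarith

lemma norm_le_one (hf : IsPosDef f) (hf0 : f 0 = 1) (y : G) : ‖f y‖ ≤ 1 := by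
  have hsq := mul_conj' (f y)
  set r := ‖f y‖
  have h := hf.two_point_nonneg y 0 r (-f y)
  rw [sub_zero, zero_sub, hf.apply_neg, hf0] at h
  have hform : (r : ℂ) * conj (r : ℂ) * 1 + r * conj (-f y) * f y + -f y * conj (r : ℂ) * conj (f y)
      + -f y * conj (-f y) * 1 = ((2 * r ^ 2 * (1 - r) : ℝ) : ℂ) := by
    simp only [conj_ofReal, _root_.map_neg]
    push_cast
    linear_combination (-(2 : ℂ) * r + 1) * hsq
  rw [hform, zero_le_real] at h
  by_contra! hr
  nlinarith [mul_pos (zero_lt_one.trans hr) (zero_lt_one.trans hr)]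

lemma const_mul (hf : IsPosDef f) {t : ℝ} (ht : 0 ≤ t) : IsPosDef (fun x => (t : ℂ) * f x) := by
  intro n x c
  convert mul_nonneg (zero_le_real.mpr ht) (hf n x c) using 1
  simp only [mul_sum]
  exact sum_congr rfl fun j _ => sum_congr rfl fun k _ => by ring

lemma add {g : G → ℂ} (hf : IsPosDef f) (hg : IsPosDef g) : IsPosDef (fun x => f x + g x) := by
  intro n x c
  convert add_nonneg (hf n x c) (hg n x c) using 1
  simp only [← sum_add_distrib]
  exact sum_congr rfl fun j _ => sum_congr rfl fun k _ => by ring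

lemma star (hf : IsPosDef f) : IsPosDef (fun x => star (f x)) := by
  intro n x c
  convert star_nonneg_iff.mpr (hf n x (fun j => conj (c j))) using 1
  simp

lemma re (hf : IsPosDef f) : IsPosDef (fun x => ((f x).re : ℂ)) := by
  have h : (fun x => ((f x).re : ℂ)) = fun x => ((2⁻¹ : ℝ) : ℂ) * (f x + conj (f x)) := by
    funext x
    rw [add_conj]
    push_cast
    ring
  rw [h]
  exact (hf.add hf.star).const_mul (by norm_num)

lemma mul_addChar [Finite G] (hf : IsPosDef f) (ψ : AddChar G ℂ) :
    IsPosDef (fun x => f x * ψ x) := by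
  intro n x c
  convert hf n x (fun j => c j * ψ (x j)) using 1
  refine sum_congr rfl fun j _ => sum_congr rfl fun k _ => ?_
  dsimp only
  rw [sub_eq_add_neg, AddChar.map_add_eq_mul, AddChar.map_neg_eq_conj, map_mul]
  ring

end IsPosDef

section Values

variable {G : Type*} [AddCommGroup G] (H : Set G) (g : G)

/-- At `G = ZMod m`, `g = 1`, the suprema of `posDefNormValues` and `realPosDefValues` are the
paper's `𝒞ℱ_m(H)` and `𝒦_m(H)`. -/
def posDefNormValues : Set ℝ :=
  {s | ∃ φ : G → ℂ, IsPosDef φ ∧ φ 0 = 1 ∧ (∀ x ∉ H, φ x = 0) ∧ ‖φ g‖ = s}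

def realPosDefValues : Set ℝ :=
  {s | ∃ φ : G → ℝ, IsPosDef (fun x => ((φ x : ℝ) : ℂ)) ∧ φ 0 = 1 ∧
    (∀ x ∉ H, φ x = 0) ∧ φ g = s}

lemma posDefNormValues_subset_Iic : posDefNormValues H g ⊆ Set.Iic 1 := by
  rintro _ ⟨φ, hφ, hφ0, -, rfl⟩
  exact hφ.norm_le_one hφ0 g

lemma bddAbove_posDefNormValues : BddAbove (posDefNormValues H g) :=
  bddAbove_Iic.mono (posDefNormValues_subset_Iic H g)

variable {H g} in
lemma abs_mem_posDefNormValues {s : ℝ} (hs : s ∈ realPosDefValues H g) :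
    |s| ∈ posDefNormValues H g := by
  obtain ⟨φ, hφ, hφ0, hφH, rfl⟩ := hs
  exact ⟨fun x => φ x, hφ, by simp [hφ0], fun x hx => by simp [hφH x hx], norm_real _⟩

lemma bddAbove_realPosDefValues : BddAbove (realPosDefValues H g) :=
  ⟨1, fun s hs => (le_abs_self s).trans
    (posDefNormValues_subset_Iic H g (abs_mem_posDefNormValues hs))⟩

lemma sSup_realPosDefValues_le : sSup (realPosDefValues H g) ≤ sSup (posDefNormValues H g) :=
  Real.sSup_le (fun _ hs => (le_abs_self _).trans
      (le_csSup (bddAbove_posDefNormValues H g) (abs_mem_posDefNormValues hs)))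
    (Real.sSup_nonneg (by rintro _ ⟨φ, -, -, -, rfl⟩; exact norm_nonneg _))

variable {H} in
lemma re_mul_addChar_mem_realPosDefValues [Finite G] {φ : G → ℂ} (hφ : IsPosDef φ)
    (hφ0 : φ 0 = 1) (hφH : ∀ x ∉ H, φ x = 0) (ψ : AddChar G ℂ) :
    (φ g * ψ g).re ∈ realPosDefValues H g :=
  ⟨fun x => (φ x * ψ x).re, (hφ.mul_addChar ψ).re, by simp [hφ0],
    fun x hx => by simp [hφH x hx], rfl⟩

end Values

lemma Complex.re_mul_exp_ofReal_mul_I (z : ℂ) (θ : ℝ) :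
    (z * exp (θ * I)).re = ‖z‖ * Real.cos (arg z + θ) := by
  conv_lhs => rw [← norm_mul_exp_arg_mul_I z]
  rw [mul_assoc, ← exp_add, ← add_mul, ← ofReal_add, re_ofReal_mul, exp_ofReal_mul_I_re]

lemma exists_int_abs_add_mul_le (t : ℝ) {p : ℝ} (hp : 0 < p) : ∃ j : ℤ, |t + j * p| ≤ p / 2 := by
  refine ⟨round (-t / p), ?_⟩
  have h : t + round (-t / p) * p = -p * (-t / p - round (-t / p)) := by field_simp; ring
  rw [h, abs_mul, abs_neg, abs_of_pos hp]
  linarith [mul_le_mul_of_nonneg_left (abs_sub_round (-t / p)) hp.le]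

lemma exists_int_cos_pi_div_mul_norm_le_re (m : ℕ) [NeZero m] (z : ℂ) :
    ∃ j : ℤ, Real.cos (Real.pi / m) * ‖z‖ ≤ (z * exp (2 * Real.pi * I * j / m)).re := by
  have hm : (1 : ℝ) ≤ m := Nat.one_le_cast.mpr (NeZero.one_le)
  obtain ⟨j, hj⟩ := exists_int_abs_add_mul_le (arg z) (by positivity : 0 < 2 * Real.pi / m)
  refine ⟨j, ?_⟩
  have hexp : 2 * Real.pi * I * j / m = ((j * (2 * Real.pi / m) : ℝ) : ℂ) * I := by
    push_cast; ring
  rw [hexp, re_mul_exp_ofReal_mul_I, mul_comm]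
  gcongr
  rw [← Real.cos_abs (arg z + _)]
  exact Real.cos_le_cos_of_nonneg_of_le_pi (abs_nonneg _)
    (div_le_self Real.pi_pos.le hm) (hj.trans_eq (by ring))

lemma mul_csSup_le_of_forall_mul_le {A B : Set ℝ} {c : ℝ} (hA : BddAbove A) (hne : A.Nonempty)
    (h : ∀ s ∈ A, c * s ≤ sSup B) : c * sSup A ≤ sSup B := by
  rcases le_or_gt 0 c with hc | hc
  · rw [← smul_eq_mul, ← Real.sSup_smul_of_nonneg hc]
    exact csSup_le (hne.smul_set) (by rintro _ ⟨s, hs, rfl⟩; exact h s hs)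
  · obtain ⟨s, hs⟩ := hne
    exact (mul_le_mul_of_nonpos_left (le_csSup hA hs) hc.le).trans (h s hs)

section ZMod

variable {m : ℕ} [NeZero m] (H : Set (ZMod m))

lemma cos_pi_div_mul_le_sSup_realPosDefValues {s : ℝ} (hs : s ∈ posDefNormValues H 1) :
    Real.cos (Real.pi / m) * s ≤ sSup (realPosDefValues H 1) := by
  obtain ⟨φ, hφ, hφ0, hφH, rfl⟩ := hs
  obtain ⟨j, hj⟩ := exists_int_cos_pi_div_mul_norm_le_re m (φ 1)
  have hmem := re_mul_addChar_mem_realPosDefValues 1 hφ hφ0 hφH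
    (ZMod.stdAddChar.mulShift (j : ZMod m))
  rw [AddChar.mulShift_apply, mul_one, ZMod.stdAddChar_coe] at hmem
  exact hj.trans (le_csSup (bddAbove_realPosDefValues H 1) hmem)

lemma cos_pi_div_mul_sSup_posDefNormValues_le :
    Real.cos (Real.pi / m) * sSup (posDefNormValues H 1) ≤ sSup (realPosDefValues H 1) := by
  rcases (posDefNormValues H (1 : ZMod m)).eq_empty_or_nonempty with hC | hC
  · have hR : realPosDefValues H (1 : ZMod m) = ∅ :=
      Set.eq_empty_of_forall_notMem fun _ hs => hC.subset (abs_mem_posDefNormValues hs)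
    simp [hC, hR] -- both sides are `sSup ∅ = 0`
  · exact mul_csSup_le_of_forall_mul_le (bddAbove_posDefNormValues H 1) hC
      fun _ hs => cos_pi_div_mul_le_sSup_realPosDefValues H hs

end ZMod

theorem stmt15_general (m : ℕ) (hm : 1 ≤ m) (H : Set (ZMod m)) :
    Real.cos (Real.pi / m) *
        sSup {s : ℝ | ∃ φ : ZMod m → ℂ, IsPosDef φ ∧ φ 0 = 1 ∧
          (∀ x ∉ H, φ x = 0) ∧ ‖φ 1‖ = s} ≤
      sSup {s : ℝ | ∃ φ : ZMod m → ℝ, IsPosDef (fun x => ((φ x : ℝ) : ℂ)) ∧ φ 0 = 1 ∧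
        (∀ x ∉ H, φ x = 0) ∧ φ 1 = s} ∧
    sSup {s : ℝ | ∃ φ : ZMod m → ℝ, IsPosDef (fun x => ((φ x : ℝ) : ℂ)) ∧ φ 0 = 1 ∧
        (∀ x ∉ H, φ x = 0) ∧ φ 1 = s} ≤
      sSup {s : ℝ | ∃ φ : ZMod m → ℂ, IsPosDef φ ∧ φ 0 = 1 ∧
        (∀ x ∉ H, φ x = 0) ∧ ‖φ 1‖ = s} := by
  have : NeZero m := ⟨by omega⟩
  exact ⟨cos_pi_div_mul_sSup_posDefNormValues_le H, sSup_realPosDefValues_le H 1⟩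

theorem stmt15 (m : ℕ) (hm : 1 ≤ m) (H : Set (ZMod m))
    (hsym : ∀ x ∈ H, -x ∈ H) (h0 : (0 : ZMod m) ∈ H) (h1 : (1 : ZMod m) ∈ H) :
    Real.cos (Real.pi / m) *
        sSup {s : ℝ | ∃ φ : ZMod m → ℂ, IsPosDef φ ∧ φ 0 = 1 ∧
          (∀ x ∉ H, φ x = 0) ∧ ‖φ 1‖ = s} ≤
      sSup {s : ℝ | ∃ φ : ZMod m → ℝ, IsPosDef (fun x => ((φ x : ℝ) : ℂ)) ∧ φ 0 = 1 ∧
        (∀ x ∉ H, φ x = 0) ∧ φ 1 = s} ∧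
    sSup {s : ℝ | ∃ φ : ZMod m → ℝ, IsPosDef (fun x => ((φ x : ℝ) : ℂ)) ∧ φ 0 = 1 ∧
        (∀ x ∉ H, φ x = 0) ∧ φ 1 = s} ≤
      sSup {s : ℝ | ∃ φ : ZMod m → ℂ, IsPosDef φ ∧ φ 0 = 1 ∧
        (∀ x ∉ H, φ x = 0) ∧ ‖φ 1‖ = s} :=
  stmt15_general m hm H
end
end

section
/- Let H ⊆ ℤ be a fixed finite symmetric set with 0, 1 ∈ H. Then lim_{m→∞} 𝒦_m(H) = 𝒦^c(H), where for m > 2·max(H) the set H is regarded as a subset of ℤ_m via reduction mod m. -/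
open Complex ComplexOrder Finset MeasureTheory

noncomputable section

namespace AuxPD


variable {G : Type*} [AddCommGroup G]

lemma sum_nonneg_of_posdef {f : G → ℂ} (hf : IsPosDef f) {ι : Type*} [Fintype ι]
    (x : ι → G) (c : ι → ℂ) :
    0 ≤ ∑ j, ∑ k, c j * (starRingEnd ℂ) (c k) * f (x j - x k) := by
  classical
  let e := (Fintype.equivFin ι).symm
  have h := hf (Fintype.card ι) (x ∘ e) (c ∘ e)
  have heq : ∑ j, ∑ k, (c ∘ e) j * (starRingEnd ℂ) ((c ∘ e) k) * f ((x ∘ e) j - (x ∘ e) k)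
      = ∑ j, ∑ k, c j * (starRingEnd ℂ) (c k) * f (x j - x k) := by
    rw [← Equiv.sum_comp e (fun j => ∑ k, c j * (starRingEnd ℂ) (c k) * f (x j - x k))]
    exact Finset.sum_congr rfl fun j _ =>
      Equiv.sum_comp e (fun k => c (e j) * (starRingEnd ℂ) (c k) * f (x (e j) - x k))
  rwa [heq] at h

lemma delta_posdef [DecidableEq G] :
    IsPosDef (fun x : G => if x = 0 then (1 : ℂ) else 0) := by
  classical
  intro n x c
  have key : ∀ j k, c j * (starRingEnd ℂ) (c k) * (if x j - x k = 0 then (1:ℂ) else 0)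
      = ∑ v ∈ Finset.univ.image x,
          (if x j = v then c j else 0) * (starRingEnd ℂ) (if x k = v then c k else 0) := by
    intro j k
    rw [Finset.sum_eq_single (x j)]
    · by_cases h : x j = x k
      · simp [h, sub_eq_zero]
      · simp [h, sub_eq_zero, Ne.symm h, fun hh : x k = x j => h hh.symm]
    · intro v _ hv
      simp [Ne.symm hv]
    · intro hh
      exact absurd (Finset.mem_image_of_mem x (Finset.mem_univ j)) hh
  calc (0:ℂ) ≤ ∑ v ∈ Finset.univ.image x,
        (∑ j, if x j = v then c j else 0) * (starRingEnd ℂ) (∑ j, if x j = v then c j else 0) := by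
        refine Finset.sum_nonneg fun v _ => ?_
        rw [Complex.mul_conj]
        exact_mod_cast Complex.normSq_nonneg _
    _ = ∑ j, ∑ k, c j * (starRingEnd ℂ) (c k) * (if x j - x k = 0 then (1:ℂ) else 0) := by
        simp_rw [key, map_sum, Finset.sum_mul, Finset.mul_sum]
        rw [Finset.sum_comm]
        exact Finset.sum_congr rfl fun v _ => Finset.sum_comm


variable {G : Type*} [AddCommGroup G] {g : G → ℝ}

lemma quad2 (hg : IsPosDef fun x => ((g x : ℝ) : ℂ)) (a : G) (c0 c1 : ℂ) :
    0 ≤ c0 * (starRingEnd ℂ) c0 * (g 0 : ℂ) + c0 * (starRingEnd ℂ) c1 * (g (-a) : ℂ)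
      + c1 * (starRingEnd ℂ) c0 * (g a : ℂ) + c1 * (starRingEnd ℂ) c1 * (g 0 : ℂ) := by
  have h := hg 2 ![0, a] ![c0, c1]
  simpa [Fin.sum_univ_two, zero_sub, sub_zero, add_assoc] using h

lemma even_of (hg : IsPosDef fun x => ((g x : ℝ) : ℂ)) (a : G) : g (-a) = g a := by
  have h := quad2 hg a 1 Complex.I
  rw [Complex.nonneg_iff] at h
  have := h.2
  simp [Complex.ext_iff] at this ⊢
  linarith

lemma le_zero_of (hg : IsPosDef fun x => ((g x : ℝ) : ℂ)) (a : G) : g a ≤ g 0 := by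
  have h := quad2 hg a 1 (-1)
  rw [even_of hg a] at h
  rw [Complex.nonneg_iff] at h
  have := h.1
  simp [Complex.ext_iff] at this
  linarith

lemma neg_zero_le_of (hg : IsPosDef fun x => ((g x : ℝ) : ℂ)) (a : G) : -(g 0) ≤ g a := by
  have h := quad2 hg a 1 1
  rw [even_of hg a] at h
  rw [Complex.nonneg_iff] at h
  have := h.1
  simp [Complex.ext_iff] at this
  linarith




-- counting lemmas over range
variable {c : ℝ}

lemma sum_ite_pred (N : ℕ) (hN : 1 ≤ N) (c : ℝ) (a : ℕ) (ha : a < N) :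
    ∑ b ∈ Finset.range N, (if b + 1 = a then c else 0) = if 1 ≤ a then c else 0 := by
  by_cases h : 1 ≤ a
  · rw [if_pos h]
    have e1 : ∑ b ∈ Finset.range N, (if b + 1 = a then c else 0)
        = ∑ b ∈ Finset.range N, (if b = a - 1 then c else 0) :=
      Finset.sum_congr rfl fun b _ => by
        simp only [show (b + 1 = a) ↔ (b = a - 1) from by omega]
    rw [e1, Finset.sum_ite_eq' (Finset.range N) (a-1), if_pos (Finset.mem_range.mpr (by omega))]
  · rw [if_neg h]
    exact Finset.sum_eq_zero fun b _ => by rw [if_neg (by omega)]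

lemma sum_ite_succ (N : ℕ) (c : ℝ) (a : ℕ) :
    ∑ b ∈ Finset.range N, (if a + 1 = b then c else 0) = if a + 1 < N then c else 0 := by
  rw [Finset.sum_ite_eq (Finset.range N) (a+1)]
  simp [Finset.mem_range]

lemma sum_ite_ge_one (N : ℕ) (hN : 1 ≤ N) (c : ℝ) :
    ∑ a ∈ Finset.range N, (if 1 ≤ a then c else 0) = ((N : ℝ) - 1) * c := by
  have : ∀ a ∈ Finset.range N, (if 1 ≤ a then c else 0) = c - (if a = 0 then c else 0) := by
    intro a _
    by_cases h : a = 0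
    · simp [h]
    · rw [if_pos (by omega), if_neg h, sub_zero]
  rw [Finset.sum_congr rfl this, Finset.sum_sub_distrib, Finset.sum_const, Finset.card_range,
    Finset.sum_ite_eq' (Finset.range N) 0, if_pos (Finset.mem_range.mpr (by omega))]
  push_cast
  ring

lemma sum_ite_lt_last (N : ℕ) (hN : 1 ≤ N) (c : ℝ) :
    ∑ a ∈ Finset.range N, (if a + 1 < N then c else 0) = ((N : ℝ) - 1) * c := by
  have : ∀ a ∈ Finset.range N, (if a + 1 < N then c else 0) = c - (if a = N - 1 then c else 0) := by
    intro a ha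
    rw [Finset.mem_range] at ha
    by_cases h : a = N - 1
    · rw [if_neg (by omega), if_pos h]; ring
    · rw [if_pos (by omega), if_neg h, sub_zero]
  rw [Finset.sum_congr rfl this, Finset.sum_sub_distrib, Finset.sum_const, Finset.card_range,
    Finset.sum_ite_eq' (Finset.range N) (N-1), if_pos (Finset.mem_range.mpr (by omega))]
  push_cast
  ring


section Construct

variable (H : Finset ℤ) (ψ : ℤ → ℝ) (m : ℕ)
variable (M : ℕ)
variable (hM : ∀ n ∈ H, |n| ≤ (M:ℤ)) (hsupp : ∀ n : ℤ, n ∉ H → ψ n = 0)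
variable (hm : 2 * M + 2 ≤ m)

include hM hsupp hm

lemma W_eval (D : ℤ) (hD : |D| < (m:ℤ)) (N : ℕ) (hN : 1 ≤ N) :
    ∑ a ∈ Finset.range N, ∑ b ∈ Finset.range N, ψ (D + ((a:ℤ) - (b:ℤ)) * m)
      = N * ψ D + ((N : ℝ) - 1) * (ψ (D + m) + ψ (D - m)) := by
  have key : ∀ a ∈ Finset.range N, ∀ b ∈ Finset.range N,
      ψ (D + ((a:ℤ) - (b:ℤ)) * m)
        = (if b = a then ψ D else 0) + (if b + 1 = a then ψ (D + m) else 0)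
          + (if a + 1 = b then ψ (D - m) else 0) := by
    intro a _ b _
    by_cases h1 : b = a
    · rw [if_pos h1, if_neg (by omega), if_neg (by omega)]
      rw [show ((a:ℤ) - b) = 0 by omega]
      ring_nf
    · rw [if_neg h1]
      by_cases h2 : b + 1 = a
      · rw [if_pos h2, if_neg (by omega)]
        rw [show ((a:ℤ) - b) = 1 by omega]
        ring_nf
      · rw [if_neg h2]
        by_cases h3 : a + 1 = b
        · rw [if_pos h3]
          rw [show ((a:ℤ) - b) = -1 by omega]
          ring_nf
        · rw [if_neg h3]
          have hd : 2 ≤ |(a:ℤ) - b| := by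
            rcases le_or_gt ((a:ℤ) - b) 0 with h | h
            · rw [abs_of_nonpos h]; omega
            · rw [abs_of_pos h]; omega
          have harg : (M:ℤ) < |D + ((a:ℤ) - b) * m| := by
            have h4 : |((a:ℤ) - b) * m| ≤ |D + ((a:ℤ) - b) * m| + |D| := by
              calc |((a:ℤ) - b) * m| = |(D + ((a:ℤ) - b) * m) - D| := by ring_nf
                _ ≤ |D + ((a:ℤ) - b) * m| + |D| := abs_sub _ _
            rw [abs_mul, Int.abs_natCast] at h4
            nlinarith [abs_nonneg D]
          have : D + ((a:ℤ) - b) * m ∉ H := fun hmem => by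
            have := hM _ hmem
            omega
          rw [hsupp _ this]
          ring
  rw [Finset.sum_congr rfl (fun a ha => Finset.sum_congr rfl (key a ha))]
  have inner : ∀ a ∈ Finset.range N,
      ∑ b ∈ Finset.range N, ((if b = a then ψ D else 0) + (if b + 1 = a then ψ (D + m) else 0)
          + (if a + 1 = b then ψ (D - m) else 0))
      = ψ D + (if 1 ≤ a then ψ (D + m) else 0) + (if a + 1 < N then ψ (D - m) else 0) := by
    intro a ha
    rw [Finset.mem_range] at ha
    rw [Finset.sum_add_distrib, Finset.sum_add_distrib,
      Finset.sum_ite_eq' (Finset.range N) a, if_pos (Finset.mem_range.mpr ha),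
      sum_ite_pred N hN (ψ (D+m)) a ha, sum_ite_succ N (ψ (D-m)) a]
  rw [Finset.sum_congr rfl inner, Finset.sum_add_distrib, Finset.sum_add_distrib,
    Finset.sum_const, Finset.card_range, sum_ite_ge_one N hN, sum_ite_lt_last N hN]
  push_cast
  ring

end Construct


lemma nonneg_of_scaled (Q R : ℂ) (h : ∀ N : ℕ, 1 ≤ N → 0 ≤ (N:ℂ) * Q - R) : 0 ≤ Q := by
  have hre : ∀ N : ℕ, 1 ≤ N → 0 ≤ (N:ℝ) * Q.re - R.re := by
    intro N hN
    have := (Complex.nonneg_iff.mp (h N hN)).1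
    simpa using this
  have him : ∀ N : ℕ, 1 ≤ N → (N:ℝ) * Q.im - R.im = 0 := by
    intro N hN
    have := (Complex.nonneg_iff.mp (h N hN)).2
    simpa using this.symm
  rw [Complex.nonneg_iff]
  constructor
  · by_contra hq
    push_neg at hq
    obtain ⟨N, hN⟩ := exists_nat_gt (R.re / Q.re)
    have hN1 : 1 ≤ max N 1 := le_max_right _ _
    have h2 := hre (max N 1) hN1
    have hcast : (N:ℝ) ≤ ((max N 1 : ℕ) : ℝ) := by exact_mod_cast le_max_left N 1
    have : R.re / Q.re < ((max N 1 : ℕ) : ℝ) := lt_of_lt_of_le hN hcast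
    have := (div_lt_iff_of_neg hq).mp this
    linarith
  · have e1 := him 1 le_rfl
    have e2 := him 2 (by norm_num)
    push_cast at e1 e2
    linarith



section PhiVal

variable (H : Finset ℤ) (ψ : ℤ → ℝ) (m : ℕ) (M : ℕ)
variable (hM : ∀ n ∈ H, |n| ≤ (M:ℤ)) (hsupp : ∀ n : ℤ, n ∉ H → ψ n = 0)
variable (hm : 2 * M + 2 ≤ m)

include hM hsupp hm

lemma phi_val (D : ℤ) (hD : |D| < (m:ℤ)) :
    ∑ n ∈ H, (if (n : ZMod m) = (D : ZMod m) then ψ n else 0)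
      = ψ D + ψ (D + m) + ψ (D - m) := by
  have hm0 : (0:ℤ) < m := by exact_mod_cast Nat.pos_of_ne_zero (by omega)
  set T : Finset ℤ := insert (D - m) (insert D {D + m}) with hT
  have sub1 : H ⊆ H ∪ T := Finset.subset_union_left
  have sub2 : T ⊆ H ∪ T := Finset.subset_union_right
  have step1 : ∑ n ∈ H, (if (n : ZMod m) = (D : ZMod m) then ψ n else 0)
      = ∑ n ∈ H ∪ T, (if (n : ZMod m) = (D : ZMod m) then ψ n else 0) := by
    refine Finset.sum_subset sub1 fun n _ hn => ?_
    rw [hsupp n hn, ite_self]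
  have step2 : ∑ n ∈ H ∪ T, (if (n : ZMod m) = (D : ZMod m) then ψ n else 0)
      = ∑ n ∈ T, (if (n : ZMod m) = (D : ZMod m) then ψ n else 0) := by
    refine (Finset.sum_subset sub2 fun n hn hnT => ?_).symm
    have hnH : n ∈ H := by
      rcases Finset.mem_union.mp hn with h | h
      · exact h
      · exact absurd h hnT
    by_cases hc : (n : ZMod m) = (D : ZMod m)
    · exfalso
      have hdvd : (m:ℤ) ∣ n - D := Int.ModEq.dvd ((ZMod.intCast_eq_intCast_iff _ _ _).mp hc).symm
      obtain ⟨k, hk⟩ := hdvd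
      have hnM : |n| ≤ (M:ℤ) := hM n hnH
      have habs : |(m:ℤ) * k| < 2 * m := by
        rw [← hk]
        calc |n - D| ≤ |n| + |D| := abs_sub _ _
          _ < 2 * m := by omega
      rw [abs_mul, abs_of_pos hm0] at habs
      have hk1 : |k| ≤ 1 := by nlinarith [abs_nonneg k]
      have hk2 := abs_le.mp hk1
      have : k = -1 ∨ k = 0 ∨ k = 1 := by omega
      apply hnT
      rw [hT]
      simp only [Finset.mem_insert, Finset.mem_singleton]
      rcases this with h | h | h <;> rw [h] at hk <;> omega
    · rw [if_neg hc]
  have hcast : ∀ n ∈ T, ((n : ZMod m) = (D : ZMod m)) := by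
    intro n hn
    rw [hT] at hn
    simp only [Finset.mem_insert, Finset.mem_singleton] at hn
    rcases hn with h | h | h <;> subst h <;> push_cast [ZMod.natCast_self] <;> ring
  have step3 : ∑ n ∈ T, (if (n : ZMod m) = (D : ZMod m) then ψ n else 0)
      = ∑ n ∈ T, ψ n := Finset.sum_congr rfl fun n hn => if_pos (hcast n hn)
  have hd1 : D - m ∉ insert D ({D + m} : Finset ℤ) := by
    simp only [Finset.mem_insert, Finset.mem_singleton]
    omega
  have hd2 : D ∉ ({D + m} : Finset ℤ) := by
    simp only [Finset.mem_singleton]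
    omega
  rw [step1, step2, step3, hT, Finset.sum_insert hd1, Finset.sum_insert hd2,
    Finset.sum_singleton]
  ring

end PhiVal

section PartA

variable (H : Finset ℤ) (ψ : ℤ → ℝ) (m : ℕ) (M : ℕ)
variable (hM : ∀ n ∈ H, |n| ≤ (M:ℤ)) (hsupp : ∀ n : ℤ, n ∉ H → ψ n = 0)
variable (hm : 2 * M + 2 ≤ m)

include hM hsupp hm

lemma phi_posdef (hpd : IsPosDef fun n : ℤ => ((ψ n : ℝ) : ℂ)) :
    IsPosDef (fun z : ZMod m => (((∑ n ∈ H, if (n : ZMod m) = z then ψ n else 0) : ℝ) : ℂ)) := by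
  intro n x c
  haveI : NeZero m := ⟨by omega⟩
  have hy : ∀ j, ((((x j).val : ℤ)) : ZMod m) = x j := by
    intro j
    push_cast
    simp [ZMod.natCast_val, ZMod.cast_id]
  set y : Fin n → ℤ := fun j => ((x j).val : ℤ) with hy'
  have hylt : ∀ j, 0 ≤ y j ∧ y j < (m:ℤ) := by
    intro j
    refine ⟨Int.natCast_nonneg _, ?_⟩
    simp only [hy']
    exact_mod_cast (x j).val_lt
  have hDlt : ∀ j k, |y j - y k| < (m:ℤ) := by
    intro j k
    have h1 := hylt j; have h2 := hylt k
    rw [abs_lt]; constructor <;> omega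
  have hphi : ∀ j k, (∑ n ∈ H, if (n : ZMod m) = x j - x k then ψ n else 0)
      = ψ (y j - y k) + ψ (y j - y k + m) + ψ (y j - y k - m) := by
    intro j k
    have hx : x j - x k = (((y j - y k : ℤ)) : ZMod m) := by
      rw [← hy j, ← hy k]; simp only [hy']; push_cast; ring
    rw [hx]
    exact phi_val H ψ m M hM hsupp hm _ (hDlt j k)
  set R : ℂ := ∑ j, ∑ k, c j * (starRingEnd ℂ) (c k)
      * ((ψ (y j - y k + m) + ψ (y j - y k - m) : ℝ) : ℂ) with hR
  apply nonneg_of_scaled _ R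
  intro N hN
  have h := sum_nonneg_of_posdef hpd (ι := Fin n × Fin N)
    (fun p => y p.1 + ((p.2 : ℕ) : ℤ) * m) (fun p => c p.1)
  have e1 : ∑ p : Fin n × Fin N, ∑ q : Fin n × Fin N,
      c p.1 * (starRingEnd ℂ) (c q.1)
        * ((ψ ((y p.1 + ((p.2:ℕ):ℤ) * m) - (y q.1 + ((q.2:ℕ):ℤ) * m)) : ℝ) : ℂ)
      = ∑ j, ∑ k, c j * (starRingEnd ℂ) (c k)
        * (((∑ a ∈ Finset.range N, ∑ b ∈ Finset.range N,
            ψ (y j - y k + ((a:ℤ) - (b:ℤ)) * m)) : ℝ) : ℂ) := by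
    rw [Fintype.sum_prod_type]
    refine Finset.sum_congr rfl fun j _ => ?_
    calc ∑ s : Fin N, ∑ q : Fin n × Fin N,
          c j * (starRingEnd ℂ) (c q.1)
            * ((ψ ((y j + ((s:ℕ):ℤ) * m) - (y q.1 + ((q.2:ℕ):ℤ) * m)) : ℝ) : ℂ)
        = ∑ s : Fin N, ∑ k, ∑ t : Fin N, c j * (starRingEnd ℂ) (c k)
            * ((ψ ((y j + ((s:ℕ):ℤ) * m) - (y k + ((t:ℕ):ℤ) * m)) : ℝ) : ℂ) :=
          Finset.sum_congr rfl fun s _ => Fintype.sum_prod_type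
            (f := fun q : Fin n × Fin N => c j * (starRingEnd ℂ) (c q.1)
              * ((ψ ((y j + ((s:ℕ):ℤ) * m) - (y q.1 + ((q.2:ℕ):ℤ) * m)) : ℝ) : ℂ))
      _ = ∑ k, ∑ s : Fin N, ∑ t : Fin N, c j * (starRingEnd ℂ) (c k)
            * ((ψ ((y j + ((s:ℕ):ℤ) * m) - (y k + ((t:ℕ):ℤ) * m)) : ℝ) : ℂ) :=
          Finset.sum_comm
      _ = ∑ k, c j * (starRingEnd ℂ) (c k)
            * (((∑ a ∈ Finset.range N, ∑ b ∈ Finset.range N,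
              ψ (y j - y k + ((a:ℤ) - (b:ℤ)) * m)) : ℝ) : ℂ) := by
          refine Finset.sum_congr rfl fun k _ => ?_
          simp_rw [← Finset.mul_sum]
          congr 1
          calc ∑ s : Fin N, ∑ t : Fin N,
                ((ψ ((y j + ((s:ℕ):ℤ) * m) - (y k + ((t:ℕ):ℤ) * m)) : ℝ) : ℂ)
              = ∑ s : Fin N, ∑ t : Fin N,
                ((ψ (y j - y k + (((s:ℕ):ℤ) - ((t:ℕ):ℤ)) * m) : ℝ) : ℂ) :=
                Finset.sum_congr rfl fun s _ => Finset.sum_congr rfl fun t _ => by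
                  rw [show (y j + ((s:ℕ):ℤ) * m) - (y k + ((t:ℕ):ℤ) * m)
                    = y j - y k + (((s:ℕ):ℤ) - ((t:ℕ):ℤ)) * m from by ring]
            _ = ∑ a ∈ Finset.range N, ∑ b ∈ Finset.range N,
                ((ψ (y j - y k + ((a:ℤ) - (b:ℤ)) * m) : ℝ) : ℂ) := by
                rw [Fin.sum_univ_eq_sum_range (fun a => ∑ t : Fin N,
                  ((ψ (y j - y k + (((a:ℕ):ℤ) - ((t:ℕ):ℤ)) * m) : ℝ) : ℂ)) N]
                exact Finset.sum_congr rfl fun a _ =>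
                  Fin.sum_univ_eq_sum_range (fun b =>
                    ((ψ (y j - y k + (((a:ℕ):ℤ) - ((b:ℕ):ℤ)) * m) : ℝ) : ℂ)) N
            _ = (((∑ a ∈ Finset.range N, ∑ b ∈ Finset.range N,
                ψ (y j - y k + ((a:ℤ) - (b:ℤ)) * m)) : ℝ) : ℂ) := by
                push_cast
                rfl
  have e2 : ∀ j k : Fin n, ((∑ a ∈ Finset.range N, ∑ b ∈ Finset.range N,
      ψ (y j - y k + ((a:ℤ) - (b:ℤ)) * m)) : ℝ)
      = (N : ℝ) * (∑ n' ∈ H, if (n' : ZMod m) = x j - x k then ψ n' else 0)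
        - (ψ (y j - y k + m) + ψ (y j - y k - m)) := by
    intro j k
    rw [W_eval H ψ m M hM hsupp hm _ (hDlt j k) N hN, hphi j k]
    ring
  rw [e1] at h
  have e3 : ∑ j, ∑ k, c j * (starRingEnd ℂ) (c k)
        * (((∑ a ∈ Finset.range N, ∑ b ∈ Finset.range N,
            ψ (y j - y k + ((a:ℤ) - (b:ℤ)) * m)) : ℝ) : ℂ)
      = (N:ℂ) * (∑ j, ∑ k, c j * (starRingEnd ℂ) (c k)
          * (((∑ n' ∈ H, if (n' : ZMod m) = x j - x k then ψ n' else 0) : ℝ) : ℂ)) - R := by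
    rw [hR, Finset.mul_sum, ← Finset.sum_sub_distrib]
    refine Finset.sum_congr rfl fun j _ => ?_
    rw [Finset.mul_sum, ← Finset.sum_sub_distrib]
    refine Finset.sum_congr rfl fun k _ => ?_
    rw [e2 j k]
    push_cast
    ring
  rw [e3] at h
  exact h

end PartA

section PartA2

variable (H : Finset ℤ) (m : ℕ) (M : ℕ)

lemma partA_mem (hM : ∀ n ∈ H, |n| ≤ (M:ℤ)) (h1 : (1:ℤ) ∈ H)
    (hm : 2 * M + 2 ≤ m) (ψ : ℤ → ℝ)
    (hpd : IsPosDef fun n : ℤ => ((ψ n : ℝ) : ℂ)) (hψ0 : ψ 0 = 1)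
    (hsupp : ∀ n : ℤ, n ∉ H → ψ n = 0) :
    ∃ φ : ZMod m → ℝ, IsPosDef (fun z => ((φ z : ℝ) : ℂ)) ∧ φ 0 = 1 ∧
      (∀ z : ZMod m, z ∉ H.image (fun n : ℤ => (n : ZMod m)) → φ z = 0) ∧ φ 1 = ψ 1 := by
  have hM1 : (1:ℤ) ≤ (M:ℤ) := by
    have := hM 1 h1
    simpa using this
  have hm0 : (0:ℤ) < (m:ℤ) := by exact_mod_cast Nat.pos_of_ne_zero (by omega)
  refine ⟨fun z => ∑ n ∈ H, if (n : ZMod m) = z then ψ n else 0,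
    phi_posdef H ψ m M hM hsupp hm hpd, ?_, ?_, ?_⟩
  · have h := phi_val H ψ m M hM hsupp hm 0 (by rw [show |(0:ℤ)| = 0 from abs_zero]; omega)
    have hc : ((0:ZMod m)) = (((0:ℤ)) : ZMod m) := by push_cast; rfl
    simp only [hc]
    rw [h, hψ0]
    have hmem : ((0:ℤ) + m) ∉ H := fun hc' => by
      have := hM _ hc'
      rw [zero_add, _root_.abs_of_nonneg hm0.le] at this
      omega
    have hmem' : ((0:ℤ) - m) ∉ H := fun hc' => by
      have := hM _ hc'
      rw [zero_sub, abs_neg, _root_.abs_of_nonneg hm0.le] at this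
      omega
    rw [hsupp _ hmem, hsupp _ hmem']
    ring
  · intro z hz
    refine Finset.sum_eq_zero fun n hn => ?_
    rw [if_neg fun hc => hz (Finset.mem_image.mpr ⟨n, hn, hc⟩)]
  · have h := phi_val H ψ m M hM hsupp hm 1 (by rw [show |(1:ℤ)| = 1 from abs_one]; omega)
    have hc : ((1:ZMod m)) = (((1:ℤ)) : ZMod m) := by push_cast; rfl
    simp only [hc]
    rw [h]
    have hmem : ((1:ℤ) + m) ∉ H := fun hc' => by
      have := hM _ hc'
      rw [_root_.abs_of_nonneg (by omega)] at this
      omega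
    have hmem' : ((1:ℤ) - m) ∉ H := fun hc' => by
      have := hM _ hc'
      rw [_root_.abs_of_nonpos (by omega)] at this
      omega
    rw [hsupp _ hmem, hsupp _ hmem']
    ring

end PartA2

section PartB

lemma pullback_posdef (m : ℕ) (φ : ZMod m → ℝ)
    (hpd : IsPosDef fun z : ZMod m => ((φ z : ℝ) : ℂ)) :
    IsPosDef fun t : ℤ => ((φ ((t : ℤ) : ZMod m) : ℝ) : ℂ) := by
  intro n x c
  have h := hpd n (fun j => ((x j : ℤ) : ZMod m)) c
  have e : ∀ j k : Fin n, (((x j : ℤ) : ZMod m) - ((x k : ℤ) : ZMod m))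
      = (((x j - x k : ℤ)) : ZMod m) := by
    intro j k
    push_cast
    ring
  simpa only [e] using h

lemma nonneg_lim (Q : ℂ) (f : ℕ → ℂ) (hf : ∀ i, 0 ≤ f i)
    (h : Filter.Tendsto f Filter.atTop (nhds Q)) : 0 ≤ Q := by
  rw [Complex.nonneg_iff]
  have hre : Filter.Tendsto (fun i => (f i).re) Filter.atTop (nhds Q.re) :=
    (Complex.continuous_re.tendsto _).comp h
  have him : Filter.Tendsto (fun i => (f i).im) Filter.atTop (nhds Q.im) :=
    (Complex.continuous_im.tendsto _).comp h
  refine ⟨ge_of_tendsto' hre fun i => (Complex.nonneg_iff.mp (hf i)).1, ?_⟩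
  have him0 : Filter.Tendsto (fun i => (f i).im) Filter.atTop (nhds 0) := by
    have : (fun i => (f i).im) = fun _ => (0:ℝ) := by
      funext i
      exact ((Complex.nonneg_iff.mp (hf i)).2).symm
    rw [this]
    exact tendsto_const_nhds
  exact tendsto_nhds_unique him0 him

end PartB

end AuxPD

theorem stmt18 (H : Finset ℤ) (hsym : ∀ x ∈ H, -x ∈ H)
    (h0 : (0 : ℤ) ∈ H) (h1 : (1 : ℤ) ∈ H) :
    Filter.Tendsto
      (fun m : ℕ => sSup {r : ℝ | ∃ φ : ZMod m → ℝ,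
        IsPosDef (fun x => ((φ x : ℝ) : ℂ)) ∧ φ 0 = 1 ∧
        (∀ x : ZMod m, x ∉ H.image (fun n : ℤ => (n : ZMod m)) → φ x = 0) ∧ φ 1 = r})
      Filter.atTop
      (nhds (sSup {r : ℝ | ∃ ψ : ℤ → ℝ,
        IsPosDef (fun n => ((ψ n : ℝ) : ℂ)) ∧ ψ 0 = 1 ∧
        (∀ n : ℤ, n ∉ H → ψ n = 0) ∧ ψ 1 = r})) := by
  classical
  set SS : ℕ → Set ℝ := fun m => {r : ℝ | ∃ φ : ZMod m → ℝ,
        IsPosDef (fun x => ((φ x : ℝ) : ℂ)) ∧ φ 0 = 1 ∧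
        (∀ x : ZMod m, x ∉ H.image (fun n : ℤ => (n : ZMod m)) → φ x = 0) ∧ φ 1 = r}
    with hSSdef
  set Sinf : Set ℝ := {r : ℝ | ∃ ψ : ℤ → ℝ,
        IsPosDef (fun n => ((ψ n : ℝ) : ℂ)) ∧ ψ 0 = 1 ∧
        (∀ n : ℤ, n ∉ H → ψ n = 0) ∧ ψ 1 = r} with hSinfdef
  show Filter.Tendsto (fun m : ℕ => sSup (SS m)) Filter.atTop (nhds (sSup Sinf))
  set M : ℕ := H.sup Int.natAbs with hMdef
  have hM : ∀ n ∈ H, |n| ≤ (M:ℤ) := by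
    intro n hn
    rw [Int.abs_eq_natAbs]
    exact_mod_cast Finset.le_sup (f := Int.natAbs) hn
  set K : ℝ := sSup Sinf with hK
  -- boundedness
  have hbddS : ∀ m : ℕ, BddAbove (SS m) := by
    intro m
    refine ⟨1, fun r hr => ?_⟩
    obtain ⟨φ, hpd, hφ0, -, rfl⟩ := hr
    have := AuxPD.le_zero_of hpd 1
    rw [hφ0] at this
    exact this
  have hbddI : BddAbove Sinf := by
    refine ⟨1, fun r hr => ?_⟩
    obtain ⟨ψ, hpd, hψ0, -, rfl⟩ := hr
    have := AuxPD.le_zero_of hpd 1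
    rw [hψ0] at this
    exact this
  -- delta elements
  have hmemI : (0:ℝ) ∈ Sinf := by
    refine ⟨fun t : ℤ => if t = 0 then 1 else 0, ?_, if_pos rfl, ?_, if_neg one_ne_zero⟩
    · have he : (fun t : ℤ => (((if t = 0 then (1:ℝ) else 0) : ℝ) : ℂ))
          = fun t : ℤ => if t = 0 then (1:ℂ) else 0 := by
        funext t
        split <;> simp
      rw [he]
      exact AuxPD.delta_posdef
    · intro t ht
      show (if t = 0 then (1:ℝ) else 0) = 0
      exact if_neg fun hc => ht (by rw [hc]; exact h0)
  have hneS : ∀ m : ℕ, (SS m).Nonempty := by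
    intro m
    refine ⟨_, ⟨fun z : ZMod m => if z = 0 then 1 else 0, ?_, if_pos rfl, ?_, rfl⟩⟩
    · have he : (fun z : ZMod m => (((if z = 0 then (1:ℝ) else 0) : ℝ) : ℂ))
          = fun z : ZMod m => if z = 0 then (1:ℂ) else 0 := by
        funext z
        split <;> simp
      rw [he]
      exact AuxPD.delta_posdef
    · intro z hz
      show (if z = 0 then (1:ℝ) else 0) = 0
      refine if_neg fun hc => hz ?_
      rw [hc]
      exact Finset.mem_image.mpr ⟨0, h0, by push_cast; rfl⟩
  have hneI : Sinf.Nonempty := ⟨0, hmemI⟩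
  have hK0 : 0 ≤ K := le_csSup hbddI hmemI
  -- part (a)
  have partA : ∀ m : ℕ, 2 * M + 2 ≤ m → K ≤ sSup (SS m) := by
    intro m hm
    refine csSup_le_csSup (hbddS m) hneI ?_
    rintro r ⟨ψ, hpd, hψ0, hsupp, rfl⟩
    obtain ⟨φ, hφpd, hφ0, hφsupp, hφ1⟩ :=
      AuxPD.partA_mem H m M hM h1 hm ψ hpd hψ0 hsupp
    exact ⟨φ, hφpd, hφ0, hφsupp, hφ1⟩
  -- part (b)
  have partB : ∀ ε : ℝ, 0 < ε → ∀ᶠ m in Filter.atTop, sSup (SS m) ≤ K + ε := by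
    intro ε hε
    by_contra hcon
    rw [Filter.not_eventually] at hcon
    have hfreq : ∃ᶠ m in Filter.atTop, K + ε < sSup (SS m) :=
      hcon.mono fun m hm => lt_of_not_ge hm
    obtain ⟨u, humono, hu⟩ := Filter.extraction_of_frequently_atTop hfreq
    have hex : ∀ i : ℕ, ∃ r ∈ SS (u i), K + ε < r := by
      intro i
      by_contra hc
      push_neg at hc
      have : sSup (SS (u i)) ≤ K + ε := Real.sSup_le (fun r hr => hc r hr) (by linarith)
      exact absurd (hu i) (not_lt.mpr this)
    have hφex : ∀ i : ℕ, ∃ φ : ZMod (u i) → ℝ,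
        IsPosDef (fun z => ((φ z : ℝ) : ℂ)) ∧ φ 0 = 1 ∧
        (∀ z : ZMod (u i), z ∉ H.image (fun n : ℤ => (n : ZMod (u i))) → φ z = 0) ∧
        K + ε < φ 1 := by
      intro i
      obtain ⟨r, ⟨φ, hpd, hφ0, hφsupp, hφ1⟩, hrgt⟩ := hex i
      exact ⟨φ, hpd, hφ0, hφsupp, hφ1.symm ▸ hrgt⟩
    choose φ hφpd hφ0 hφsupp hφ1 using hφex
    set w : (i : ℕ) → ℤ → ℝ := fun i t => φ i ((t : ℤ) : ZMod (u i)) with hwdef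
    have hwpd : ∀ i, IsPosDef fun t : ℤ => ((w i t : ℝ) : ℂ) := fun i =>
      AuxPD.pullback_posdef (u i) (φ i) (hφpd i)
    have hw0 : ∀ i, w i 0 = 1 := by
      intro i
      show φ i (((0:ℤ)) : ZMod (u i)) = 1
      rw [show (((0:ℤ)) : ZMod (u i)) = 0 by push_cast; rfl]
      exact hφ0 i
    have hw1 : ∀ i, K + ε < w i 1 := by
      intro i
      show K + ε < φ i (((1:ℤ)) : ZMod (u i))
      rw [show (((1:ℤ)) : ZMod (u i)) = 1 by push_cast; rfl]
      exact hφ1 i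
    have hwb : ∀ i t, |w i t| ≤ 1 := by
      intro i t
      have hle := AuxPD.le_zero_of (hwpd i) t
      have hge := AuxPD.neg_zero_le_of (hwpd i) t
      rw [hw0 i] at hle hge
      exact abs_le.mpr ⟨hge, hle⟩
    have hwsupp : ∀ t : ℤ, t ∉ H → ∀ᶠ i in Filter.atTop, w i t = 0 := by
      intro t ht
      rw [Filter.eventually_atTop]
      refine ⟨t.natAbs + M + 1, fun i hi => ?_⟩
      have hui : t.natAbs + M + 1 ≤ u i := le_trans hi humono.le_apply
      apply hφsupp i
      intro hmem
      obtain ⟨n', hn'H, hn'⟩ := Finset.mem_image.mp hmem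
      have hdvd : ((u i : ℤ)) ∣ t - n' :=
        Int.ModEq.dvd ((ZMod.intCast_eq_intCast_iff _ _ _).mp hn')
      have hn'M := hM n' hn'H
      have habs : |t - n'| < (u i : ℤ) := by
        have h1' : |t - n'| ≤ |t| + |n'| := abs_sub _ _
        have h2' : |t| = (t.natAbs : ℤ) := Int.abs_eq_natAbs t
        omega
      have hz := Int.eq_zero_of_abs_lt_dvd hdvd habs
      exact ht (by rw [show t = n' from by omega]; exact hn'H)
    -- compactness
    have hVmem : ∀ i, (fun h : ↥H => w i (h : ℤ)) ∈ Metric.closedBall (0 : ↥H → ℝ) 1 := by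
      intro i
      rw [Metric.mem_closedBall, dist_zero_right]
      rw [pi_norm_le_iff_of_nonneg zero_le_one]
      intro h
      rw [Real.norm_eq_abs]
      exact hwb i (h : ℤ)
    obtain ⟨a, -, g, hgmono, hga⟩ :=
      tendsto_subseq_of_bounded Metric.isBounded_closedBall hVmem
    set ψ : ℤ → ℝ := fun t => if ht : t ∈ H then a ⟨t, ht⟩ else 0 with hψdef
    have hconv : ∀ t : ℤ, Filter.Tendsto (fun i => w (g i) t) Filter.atTop (nhds (ψ t)) := by
      intro t
      by_cases ht : t ∈ H
      · have h1' := (tendsto_pi_nhds.mp hga) ⟨t, ht⟩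
        have he : ψ t = a ⟨t, ht⟩ := by rw [hψdef]; exact dif_pos ht
        rw [he]
        exact h1'
      · have he : ψ t = 0 := by rw [hψdef]; exact dif_neg ht
        rw [he]
        have hev : ∀ᶠ i in Filter.atTop, w (g i) t = 0 :=
          (hgmono.tendsto_atTop).eventually (hwsupp t ht)
        exact Filter.Tendsto.congr' (hev.mono fun i hi => hi.symm) tendsto_const_nhds
    have hψpd : IsPosDef fun t : ℤ => ((ψ t : ℝ) : ℂ) := by
      intro n x c
      refine AuxPD.nonneg_lim _
        (fun i => ∑ j, ∑ k, c j * (starRingEnd ℂ) (c k) * ((w (g i) (x j - x k) : ℝ) : ℂ))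
        (fun i => hwpd (g i) n x c) ?_
      refine tendsto_finset_sum _ fun j _ => tendsto_finset_sum _ fun k _ => ?_
      exact ((Complex.continuous_ofReal.tendsto _).comp (hconv (x j - x k))).const_mul _
    have hψ0 : ψ 0 = 1 := by
      have hc : (fun i => w (g i) 0) = fun _ : ℕ => (1:ℝ) := funext fun i => hw0 (g i)
      exact tendsto_nhds_unique (hc ▸ hconv 0) tendsto_const_nhds
    have hψsupp : ∀ t : ℤ, t ∉ H → ψ t = 0 := fun t ht => by
      rw [hψdef]; exact dif_neg ht
    have hψ1 : K + ε ≤ ψ 1 := ge_of_tendsto' (hconv 1) fun i => (hw1 (g i)).le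
    have hmem : ψ 1 ∈ Sinf := ⟨ψ, hψpd, hψ0, hψsupp, rfl⟩
    have : ψ 1 ≤ K := le_csSup hbddI hmem
    linarith
  -- assemble
  rw [Metric.tendsto_atTop]
  intro ε hε
  have hA : ∀ᶠ m in Filter.atTop, K ≤ sSup (SS m) :=
    Filter.eventually_atTop.mpr ⟨2 * M + 2, fun m hm => partA m hm⟩
  have hB := partB (ε / 2) (half_pos hε)
  obtain ⟨N, hN⟩ := Filter.eventually_atTop.mp (hA.and hB)
  refine ⟨N, fun m hm => ?_⟩
  obtain ⟨hm1, hm2⟩ := hN m hm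
  rw [Real.dist_eq, _root_.abs_of_nonneg (by linarith)]
  linarith
end
end

section
/- Let G be a locally compact abelian group, Ω ⊆ G an open symmetric neighborhood of 0, and z ∈ Ω with -z ∈ Ω. Then there exists a continuous, real-valued, positive definite function f on G with compact support contained in Ω, f(0) = 1, and f(z) ≥ 1/2. Moreover, if 2z = 0 then f can be chosen with f(z) = 1. -/
/-!
For a relatively compact open set `S` of positive Haar measure, the function
`x ↦ μ (S ∩ (S - x)) = ⟪1_S, 1_S (x + ·)⟫` is a Gram kernel of translates in `L²(μ)`, hence
positive definite; it is continuous because translation acts continuously on `L²`, and it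
vanishes outside `S̄ - S̄`. Take `S = V ∪ (z + V)` with `V` a small neighbourhood of `0`: then
`S̄ - S̄` lies in `Ω`, `S ∩ (S - z) ⊇ V` and `μ S ≤ 2 μ V`, so after dividing by `μ S` the value
at `z` is at least `1/2`; if `2z = 0` then `S - z = S` and the value is `1`.
-/

open Complex ComplexOrder Finset MeasureTheory

noncomputable section

open Set Topology Pointwise

theorem IsPosDef.of_inner {G E : Type*} [AddCommGroup G] [NormedAddCommGroup E]
    [InnerProductSpace ℂ E] {φ : G → ℂ} (T : G → E) (hT : ∀ x y, inner ℂ (T y) (T x) = φ (x - y)) :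
    IsPosDef φ := by
  intro n x c
  set v := ∑ j, c j • T (x j)
  have : ∑ j, ∑ k, c j * (starRingEnd ℂ) (c k) * φ (x j - x k) = inner ℂ v v := by
    simp only [v, sum_inner, inner_sum, inner_smul_left, inner_smul_right, Finset.mul_sum, ← hT]
    exact Finset.sum_congr rfl fun j _ => Finset.sum_congr rfl fun k _ => by ring
  rw [this]
  exact Complex.nonneg_iff.2 ⟨inner_self_nonneg (𝕜 := ℂ), (inner_self_im (𝕜 := ℂ) v).symm⟩

theorem IsPosDef.mul_const {G : Type*} [AddCommGroup G] {φ : G → ℂ} (hφ : IsPosDef φ) {r : ℂ}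
    (hr : 0 ≤ r) : IsPosDef fun x => φ x * r := by
  intro n x c
  simp only [← mul_assoc, ← Finset.sum_mul]
  exact mul_nonneg (hφ n x c) hr

theorem IsCompact.sub {G : Type*} [TopologicalSpace G] [AddGroup G] [IsTopologicalAddGroup G]
    {K L : Set G} (hK : IsCompact K) (hL : IsCompact L) : IsCompact (K - L) := by
  simpa only [sub_eq_add_neg] using hK.add hL.neg

theorem exists_isCompact_mem_nhds_zero_sub_subset {G : Type*} [TopologicalSpace G] [AddGroup G]
    [IsTopologicalAddGroup G] [LocallyCompactSpace G] {U : Set G} (hU : U ∈ 𝓝 0) :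
    ∃ s, IsCompact s ∧ s ∈ 𝓝 0 ∧ s - s ⊆ U := by
  obtain ⟨W, hW0, hWU⟩ := exists_nhds_half_neg hU
  obtain ⟨s, hs0, hsW, hsc⟩ := local_compact_nhds hW0
  exact ⟨s, hsc, hs0, by rintro _ ⟨a, ha, b, hb, rfl⟩; exact hWU a (hsW ha) b (hsW hb)⟩

theorem union_vadd_sub_union_vadd_subset {G : Type*} [AddCommGroup G] {s Ω : Set G} {z : G}
    (hs : s - s ⊆ Ω ∩ (-z +ᵥ Ω) ∩ (z +ᵥ Ω)) : (s ∪ (z +ᵥ s)) - (s ∪ (z +ᵥ s)) ⊆ Ω := by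
  have key : ∀ a ∈ s, ∀ b ∈ s, a - b ∈ Ω ∧ z + (a - b) ∈ Ω ∧ -z + (a - b) ∈ Ω := by
    intro a ha b hb
    obtain ⟨⟨h1, h2⟩, h3⟩ := hs ⟨a, ha, b, hb, rfl⟩
    simp only [mem_vadd_set_iff_neg_vadd_mem, vadd_eq_add, neg_neg] at h2 h3
    exact ⟨h1, h2, h3⟩
  rintro _ ⟨a, ha | ⟨a, ha, rfl⟩, b, hb | ⟨b, hb, rfl⟩, rfl⟩ <;> simp only [vadd_eq_add]
  · exact (key a ha b hb).1
  · rw [show a - (z + b) = -z + (a - b) by abel]; exact (key a ha b hb).2.2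
  · rw [show z + a - b = z + (a - b) by abel]; exact (key a ha b hb).2.1
  · rw [show z + a - (z + b) = a - b by abel]; exact (key a ha b hb).1

namespace MeasureTheory.Measure

section AddGroup

variable {G : Type*} [MeasurableSpace G] [AddGroup G] (μ : Measure G) (S : Set G)

/-- The convolution square `1_S ⋆ 1̃_S`. The paper convolves `χ_V + χ_{V+z}`; the indicator of
`V ∪ (z + V)` serves equally well. -/
def autocorrelation (x : G) : ℝ := μ.real (S ∩ (x + ·) ⁻¹' S)

theorem autocorrelation_zero : μ.autocorrelation S 0 = μ.real S := by
  simp [autocorrelation]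

theorem support_autocorrelation_subset : Function.support (μ.autocorrelation S) ⊆ S - S := by
  intro x hx
  have : μ (S ∩ (x + ·) ⁻¹' S) ≠ 0 := fun h => hx (by simp [autocorrelation, Measure.real, h])
  obtain ⟨t, htS, htx⟩ := nonempty_of_measure_ne_zero this
  exact ⟨x + t, htx, t, htS, add_sub_cancel_right x t⟩

theorem measureReal_le_autocorrelation_union_vadd (V : Set G) (z : G) (h : μ (V ∪ (z +ᵥ V)) ≠ ⊤) :
    μ.real V ≤ μ.autocorrelation (V ∪ (z +ᵥ V)) z :=
  measureReal_mono (fun _ ht => ⟨.inl ht, .inr (vadd_mem_vadd_set ht)⟩)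
    (ne_top_of_le_ne_top h (measure_mono inter_subset_left))

theorem autocorrelation_union_vadd_self (V : Set G) {z : G} (hz : z + z = 0) :
    μ.autocorrelation (V ∪ (z +ᵥ V)) z = μ.real (V ∪ (z +ᵥ V)) := by
  have hz' : -z = z := neg_eq_of_add_eq_zero_right hz
  have : (z + ·) ⁻¹' (V ∪ (z +ᵥ V)) = V ∪ (z +ᵥ V) := by
    ext t; simp [mem_vadd_set_iff_neg_vadd_mem, hz', ← add_assoc, hz, or_comm]
  rw [autocorrelation, this, inter_self]

theorem tsupport_autocorrelation_subset [TopologicalSpace G] [IsTopologicalAddGroup G] [T2Space G]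
    {S K : Set G} (hK : IsCompact K) (hSK : S ⊆ K) : tsupport (μ.autocorrelation S) ⊆ K - K :=
  closure_minimal ((support_autocorrelation_subset μ S).trans (sub_subset_sub hSK hSK))
    (hK.sub hK).isClosed

variable [μ.IsAddLeftInvariant]

theorem measureReal_union_vadd_le (V : Set G) (z : G) : μ.real (V ∪ (z +ᵥ V)) ≤ 2 * μ.real V := by
  have : μ.real (z +ᵥ V) = μ.real V := by simp [Measure.real, measure_vadd]
  linarith [measureReal_union_le (μ := μ) V (z +ᵥ V)]

variable [MeasurableAdd G] {S}

theorem inner_mk_vadd_indicatorConstLp (hS : MeasurableSet S) (hμS : μ S ≠ ⊤) (x y : G) :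
    inner ℂ (DomAddAct.mk y +ᵥ indicatorConstLp 2 hS hμS (1 : ℂ))
      (DomAddAct.mk x +ᵥ indicatorConstLp 2 hS hμS (1 : ℂ)) =
      (μ.autocorrelation S (x - y) : ℂ) := by
  rw [DomAddAct.mk_vadd_indicatorConstLp, DomAddAct.mk_vadd_indicatorConstLp,
    L2.inner_indicatorConstLp_one_indicatorConstLp_one (hμs := by rwa [measure_preimage_vadd])
      (hμt := by rwa [measure_preimage_vadd])]
  have : (y + ·) ⁻¹' (S ∩ (x - y + ·) ⁻¹' S) = (y + ·) ⁻¹' S ∩ (x + ·) ⁻¹' S := by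
    ext t; simp [← add_assoc]
  simp only [vadd_eq_add, autocorrelation, ← this, Measure.real, measure_preimage_add]
  rfl

theorem continuous_autocorrelation [TopologicalSpace G] [IsTopologicalAddGroup G] [BorelSpace G]
    [IsLocallyFiniteMeasure μ] [μ.InnerRegularCompactLTTop] (hS : MeasurableSet S) (hμS : μ S ≠ ⊤) :
    Continuous (μ.autocorrelation S) := by
  have : Fact ((2 : ENNReal) ≠ ⊤) := ⟨ENNReal.ofNat_ne_top⟩
  let T (x : G) := DomAddAct.mk x +ᵥ indicatorConstLp 2 hS hμS (1 : ℂ)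
  have hT : Continuous T := DomAddAct.continuous_mk.vadd continuous_const
  have hφ : μ.autocorrelation S = fun x => (inner ℂ (T 0) (T x)).re := by
    ext x; rw [μ.inner_mk_vadd_indicatorConstLp, sub_zero, ofReal_re]
  rw [hφ]
  exact continuous_re.comp (continuous_const.inner hT)

end AddGroup

theorem isPosDef_autocorrelation {G : Type*} [MeasurableSpace G] [AddCommGroup G] [MeasurableAdd G]
    (μ : Measure G) [μ.IsAddLeftInvariant] {S : Set G} (hS : MeasurableSet S) (hμS : μ S ≠ ⊤) :
    IsPosDef fun x => (μ.autocorrelation S x : ℂ) :=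
  .of_inner _ (μ.inner_mk_vadd_indicatorConstLp hS hμS)

end MeasureTheory.Measure

open MeasureTheory.Measure

theorem stmt19_general {G : Type*} [TopologicalSpace G] [AddCommGroup G]
    [IsTopologicalAddGroup G] [LocallyCompactSpace G] [T2Space G]
    (Ω : Set G) (hopen : IsOpen Ω) (h0 : (0 : G) ∈ Ω)
    (z : G) (hz : z ∈ Ω) (hzneg : -z ∈ Ω) :
    (∃ f : G → ℝ, Continuous f ∧ IsPosDef (fun x => ((f x : ℝ) : ℂ)) ∧
      HasCompactSupport f ∧ tsupport f ⊆ Ω ∧ f 0 = 1 ∧ 1 / 2 ≤ f z) ∧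
    (z + z = 0 → ∃ f : G → ℝ, Continuous f ∧ IsPosDef (fun x => ((f x : ℝ) : ℂ)) ∧
      HasCompactSupport f ∧ tsupport f ⊆ Ω ∧ f 0 = 1 ∧ f z = 1) := by
  borelize G
  let μ : Measure G := addHaar
  have hU : Ω ∩ (-z +ᵥ Ω) ∩ (z +ᵥ Ω) ∈ 𝓝 0 :=
    ((hopen.inter (hopen.vadd _)).inter (hopen.vadd _)).mem_nhds
      (by simp [mem_vadd_set_iff_neg_vadd_mem, h0, hz, hzneg])
  obtain ⟨s, hsc, hs0, hsU⟩ := exists_isCompact_mem_nhds_zero_sub_subset hU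
  set V := interior s
  set S := V ∪ (z +ᵥ V)
  set K := s ∪ (z +ᵥ s)
  have hKc : IsCompact K := hsc.union (hsc.vadd z)
  have hSK : S ⊆ K := union_subset_union interior_subset (vadd_set_mono interior_subset)
  have hSo : IsOpen S := isOpen_interior.union (isOpen_interior.vadd z)
  have hμS : μ S ≠ ⊤ := ((measure_mono hSK).trans_lt hKc.measure_lt_top).ne
  have hμS_pos : 0 < μ.real S :=
    ENNReal.toReal_pos (hSo.measure_pos μ ⟨0, .inl (mem_interior_iff_mem_nhds.2 hs0)⟩).ne' hμS
  let f x := μ.autocorrelation S x * (μ.real S)⁻¹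
  have hf_cont : Continuous f :=
    (continuous_autocorrelation μ hSo.measurableSet hμS).mul continuous_const
  have hf_posDef : IsPosDef fun x => ((f x : ℝ) : ℂ) := by
    simpa only [f, ofReal_mul] using (isPosDef_autocorrelation μ hSo.measurableSet hμS).mul_const
      (zero_le_real.2 (inv_nonneg.2 hμS_pos.le))
  have hf_tsupport : tsupport f ⊆ K - K :=
    tsupport_mul_subset_left.trans (μ.tsupport_autocorrelation_subset hKc hSK)
  have hf_compact : HasCompactSupport f :=
    (hKc.sub hKc).of_isClosed_subset isClosed_closure hf_tsupport
  have hf_supp : tsupport f ⊆ Ω := hf_tsupport.trans (union_vadd_sub_union_vadd_subset hsU)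
  have hf0 : f 0 = 1 := by simp [f, autocorrelation_zero, hμS_pos.ne']
  refine ⟨⟨f, hf_cont, hf_posDef, hf_compact, hf_supp, hf0, ?_⟩,
    fun h2z => ⟨f, hf_cont, hf_posDef, hf_compact, hf_supp, hf0, ?_⟩⟩
  · dsimp only [f]
    rw [← div_eq_mul_inv, le_div_iff₀ hμS_pos]
    linarith [μ.measureReal_le_autocorrelation_union_vadd V z hμS, μ.measureReal_union_vadd_le V z]
  · dsimp only [f]
    rw [μ.autocorrelation_union_vadd_self V h2z, mul_inv_cancel₀ hμS_pos.ne']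

theorem stmt19 {G : Type*} [TopologicalSpace G] [AddCommGroup G]
    [IsTopologicalAddGroup G] [LocallyCompactSpace G] [T2Space G]
    (Ω : Set G) (hopen : IsOpen Ω) (h0 : (0 : G) ∈ Ω)
    (hsym : ∀ x ∈ Ω, -x ∈ Ω) (z : G) (hz : z ∈ Ω) (hzneg : -z ∈ Ω) :
    (∃ f : G → ℝ, Continuous f ∧ IsPosDef (fun x => ((f x : ℝ) : ℂ)) ∧
      HasCompactSupport f ∧ tsupport f ⊆ Ω ∧ f 0 = 1 ∧ 1 / 2 ≤ f z) ∧
    (z + z = 0 → ∃ f : G → ℝ, Continuous f ∧ IsPosDef (fun x => ((f x : ℝ) : ℂ)) ∧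
      HasCompactSupport f ∧ tsupport f ⊆ Ω ∧ f 0 = 1 ∧ f z = 1) :=
  stmt19_general Ω hopen h0 z hz hzneg
end
end
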